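/- arXiv:2510.24809 — 11 statements merged into one kernel-verified Lean document; each statement's English description precedes it below -/
import Mathlib

section
/- For any connected graph G with m edges (order at least 2), HSO(G) ≥ √2·m, with equality if and only if G is regular. -/
open SimpleGraph Finset Real

noncomputable def HSO {V : Type*} [Fintype V] (G : SimpleGraph V) : ℝ :=
  letI := Classical.decRel G.Adj
  ∑ e ∈ G.edgeFinset, Sym2.lift
    ⟨fun x y => Real.sqrt ((G.degree x : ℝ) ^ 2 + (G.degree y : ℝ) ^ 2) /
      min (G.degree x : ℝ) (G.degree y : ℝ),
     fun x y => by simp [add_comm, min_comm]⟩ e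

noncomputable def SO {V : Type*} [Fintype V] (G : SimpleGraph V) : ℝ :=
  letI := Classical.decRel G.Adj
  ∑ e ∈ G.edgeFinset, Sym2.lift
    ⟨fun x y => Real.sqrt ((G.degree x : ℝ) ^ 2 + (G.degree y : ℝ) ^ 2),
     fun x y => by simp [add_comm]⟩ e

noncomputable def cDSO {V : Type*} [Fintype V] (G : SimpleGraph V) : ℝ :=
  letI := Classical.decRel G.Adj
  ∑ e ∈ G.edgeFinset, Sym2.lift
    ⟨fun x y => Real.sqrt ((G.degree x : ℝ) ^ 2 + (G.degree y : ℝ) ^ 2) /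
      max (G.degree x : ℝ) (G.degree y : ℝ),
     fun x y => by simp [add_comm, max_comm]⟩ e

noncomputable def M1 {V : Type*} [Fintype V] (G : SimpleGraph V) : ℝ :=
  letI := Classical.decRel G.Adj
  ∑ e ∈ G.edgeFinset, Sym2.lift
    ⟨fun x y => (G.degree x : ℝ) + (G.degree y : ℝ),
     fun x y => by simp [add_comm]⟩ e

def IsRegularGraph {V : Type*} [Fintype V] (G : SimpleGraph V) : Prop :=
  letI := Classical.decRel G.Adj
  ∃ k, G.IsRegularOfDegree k

def addEdge {V : Type*} (G : SimpleGraph V) (u v : V) : SimpleGraph V :=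
  G ⊔ SimpleGraph.fromEdgeSet {s(u, v)}


lemma key_aux (a b : ℝ) (ha : 0 < a) (hb : 0 < b) :
    Real.sqrt 2 * min a b ≤ Real.sqrt (a ^ 2 + b ^ 2) ∧
    (Real.sqrt (a ^ 2 + b ^ 2) = Real.sqrt 2 * min a b ↔ a = b) := by
  have hm : 0 < min a b := lt_min ha hb
  have h1 : Real.sqrt 2 * min a b = Real.sqrt (2 * (min a b) ^ 2) := by
    rw [Real.sqrt_mul (by norm_num), Real.sqrt_sq hm.le]
  constructor
  · rw [h1]
    apply Real.sqrt_le_sqrt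
    rcases min_cases a b with ⟨h, hle⟩ | ⟨h, hle⟩ <;> rw [h] <;> nlinarith
  · constructor
    · intro h
      rw [h1] at h
      have h2 : a ^ 2 + b ^ 2 = 2 * (min a b) ^ 2 :=
        (Real.sqrt_inj (by positivity) (by positivity)).1 h
      rcases min_cases a b with ⟨h3, hle⟩ | ⟨h3, hle⟩ <;> rw [h3] at h2 <;> nlinarith
    · intro h
      subst h
      rw [min_self]
      rw [show Real.sqrt 2 * a = Real.sqrt (2 * a ^ 2) from by
        rw [Real.sqrt_mul (by norm_num), Real.sqrt_sq ha.le]]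
      congr 1
      ring

theorem stmt0 {V : Type*} [Fintype V] (G : SimpleGraph V) [DecidableRel G.Adj]
    (hconn : G.Connected) (hn : 2 ≤ Fintype.card V)
    (m : ℕ) (hm : m = G.edgeFinset.card) :
    Real.sqrt 2 * m ≤ HSO G ∧ (HSO G = Real.sqrt 2 * m ↔ IsRegularGraph G) := by
  classical
  set f : Sym2 V → ℝ := fun e => Sym2.lift
    ⟨fun x y => Real.sqrt ((G.degree x : ℝ) ^ 2 + (G.degree y : ℝ) ^ 2) /
      min (G.degree x : ℝ) (G.degree y : ℝ),
     fun x y => by simp [add_comm, min_comm]⟩ e with hf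
  have hHSO : HSO G = ∑ e ∈ G.edgeFinset, f e := by
    rw [HSO]
    apply Finset.sum_congr
    · ext e; simp [SimpleGraph.mem_edgeFinset]
    · intro e _
      induction e using Sym2.ind with
      | _ u v =>
        simp only [hf, Sym2.lift_mk]
        congr!
  have hdegpos : ∀ u v : V, G.Adj u v → 0 < (G.degree u : ℝ) := by
    intro u v h
    exact_mod_cast (G.degree_pos_iff_exists_adj u).2 ⟨v, h⟩
  have hfmk : ∀ u v : V, f s(u, v) =
      Real.sqrt ((G.degree u : ℝ) ^ 2 + (G.degree v : ℝ) ^ 2) /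
      min (G.degree u : ℝ) (G.degree v : ℝ) := by
    intro u v; simp [hf]
  have hterm : ∀ e ∈ G.edgeFinset, Real.sqrt 2 ≤ f e := by
    intro e he
    induction e using Sym2.ind with
    | _ u v =>
      rw [SimpleGraph.mem_edgeFinset, SimpleGraph.mem_edgeSet] at he
      have hu := hdegpos u v he
      have hv := hdegpos v u he.symm
      rw [hfmk, le_div_iff₀ (lt_min hu hv)]
      exact (key_aux _ _ hu hv).1
  have hterm_eq : ∀ u v : V, G.Adj u v →
      (f s(u, v) = Real.sqrt 2 ↔ G.degree u = G.degree v) := by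
    intro u v h
    have hu := hdegpos u v h
    have hv := hdegpos v u h.symm
    rw [hfmk, div_eq_iff (lt_min hu hv).ne']
    rw [(key_aux _ _ hu hv).2]
    exact Nat.cast_inj
  have hconst : ∑ _e ∈ G.edgeFinset, Real.sqrt 2 = Real.sqrt 2 * m := by
    rw [Finset.sum_const, nsmul_eq_mul, hm]; ring
  have hbound : Real.sqrt 2 * m ≤ HSO G := by
    rw [hHSO, ← hconst]
    exact Finset.sum_le_sum hterm
  refine ⟨hbound, ?_, ?_⟩
  · intro h
    have hall : ∀ e ∈ G.edgeFinset, f e = Real.sqrt 2 := by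
      by_contra hne
      push_neg at hne
      obtain ⟨e, he, hne⟩ := hne
      have hlt : ∑ _e ∈ G.edgeFinset, Real.sqrt 2 < ∑ e ∈ G.edgeFinset, f e :=
        Finset.sum_lt_sum hterm ⟨e, he, lt_of_le_of_ne (hterm e he) (Ne.symm hne)⟩
      rw [hconst, ← hHSO, h] at hlt
      exact lt_irrefl _ hlt
    have hadj : ∀ u v : V, G.Adj u v → G.degree u = G.degree v := by
      intro u v huv
      exact (hterm_eq u v huv).1 (hall s(u, v) (SimpleGraph.mem_edgeFinset.2 huv))
    have hne : Nonempty V := Fintype.card_pos_iff.1 (by omega)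
    obtain ⟨v0⟩ := hne
    have hreg : ∀ v : V, G.degree v = G.degree v0 := by
      intro v
      obtain ⟨w⟩ := hconn.preconnected v v0
      induction w with
      | nil => rfl
      | cons h' p ih => exact (hadj _ _ h').trans ih
    refine ⟨G.degree v0, fun v => ?_⟩
    convert hreg v using 2
  · intro hreg
    obtain ⟨k, hk⟩ := hreg
    have hk' : ∀ v : V, G.degree v = k := by
      intro v
      have := hk v
      convert this using 2
    have hall : ∀ e ∈ G.edgeFinset, f e = Real.sqrt 2 := by
      intro e he
      induction e using Sym2.ind with
      | _ u v =>
        rw [SimpleGraph.mem_edgeFinset, SimpleGraph.mem_edgeSet] at he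
        exact (hterm_eq u v he).2 (by rw [hk' u, hk' v])
    rw [hHSO, Finset.sum_congr rfl hall, hconst]
end

section
/- For any connected graph G of order at least 2 with minimum degree δ and maximum degree Δ, (1/Δ)·SO(G) ≤ HSO(G) ≤ (1/δ)·SO(G). The left equality holds if and only if G is regular; the right equality holds if and only if every edge of G is incident to at least one vertex of degree δ. -/
open SimpleGraph Finset Real

lemma SO_eq {V : Type*} [Fintype V] (G : SimpleGraph V) [inst : DecidableRel G.Adj] :
    SO G = ∑ e ∈ G.edgeFinset, Sym2.lift
      ⟨fun x y => Real.sqrt ((G.degree x : ℝ) ^ 2 + (G.degree y : ℝ) ^ 2),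
       fun x y => by simp [add_comm]⟩ e := by
  have h : inst = Classical.decRel G.Adj := Subsingleton.elim _ _
  subst h
  rfl

lemma HSO_eq {V : Type*} [Fintype V] (G : SimpleGraph V) [inst : DecidableRel G.Adj] :
    HSO G = ∑ e ∈ G.edgeFinset, Sym2.lift
      ⟨fun x y => Real.sqrt ((G.degree x : ℝ) ^ 2 + (G.degree y : ℝ) ^ 2) /
        min (G.degree x : ℝ) (G.degree y : ℝ),
       fun x y => by simp [add_comm, min_comm]⟩ e := by
  have h : inst = Classical.decRel G.Adj := Subsingleton.elim _ _
  subst h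
  rfl

lemma IsRegularGraph_iff {V : Type*} [Fintype V] (G : SimpleGraph V) [inst : DecidableRel G.Adj] :
    IsRegularGraph G ↔ ∃ k, G.IsRegularOfDegree k := by
  have h : inst = Classical.decRel G.Adj := Subsingleton.elim _ _
  subst h
  rfl

theorem stmt1 {V : Type*} [Fintype V] (G : SimpleGraph V) [DecidableRel G.Adj]
    (hconn : G.Connected) (hn : 2 ≤ Fintype.card V) :
    ((1 : ℝ) / G.maxDegree) * SO G ≤ HSO G ∧
    HSO G ≤ ((1 : ℝ) / G.minDegree) * SO G ∧
    (((1 : ℝ) / G.maxDegree) * SO G = HSO G ↔ IsRegularGraph G) ∧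
    (HSO G = ((1 : ℝ) / G.minDegree) * SO G ↔
      ∀ u v, G.Adj u v → G.degree u = G.minDegree ∨ G.degree v = G.minDegree) := by
  have hne : Nonempty V := Fintype.card_pos_iff.mp (by omega)
  have hadj : ∀ v : V, ∃ w, G.Adj v w := by
    intro v
    obtain ⟨w, hw⟩ := Fintype.exists_ne_of_one_lt_card hn v
    obtain ⟨p⟩ := hconn.preconnected v w
    cases p with
    | nil => exact absurd rfl hw
    | cons h _ => exact ⟨_, h⟩
  have hdpos : ∀ v, 0 < G.degree v := by
    intro v
    obtain ⟨w, hw⟩ := hadj v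
    exact Finset.card_pos.mpr ⟨w, (SimpleGraph.mem_neighborFinset G v w).mpr hw⟩
  have hδpos : 0 < G.minDegree :=
    G.le_minDegree_of_forall_le_degree 1 fun v => hdpos v
  have hΔpos : 0 < G.maxDegree :=
    lt_of_lt_of_le (hdpos (Classical.arbitrary V)) (G.degree_le_maxDegree _)
  have hδR : (0:ℝ) < G.minDegree := by exact_mod_cast hδpos
  have hΔR : (0:ℝ) < G.maxDegree := by exact_mod_cast hΔpos
  have hmem : ∀ {x y : V}, s(x,y) ∈ G.edgeFinset → G.Adj x y := by
    intro x y h; rwa [mem_edgeFinset, mem_edgeSet] at h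
  have hsq : ∀ x y : V,
      (0:ℝ) < Real.sqrt ((G.degree x : ℝ) ^ 2 + (G.degree y : ℝ) ^ 2) := by
    intro x y
    have hx : (0:ℝ) < G.degree x := by exact_mod_cast hdpos x
    have hy : (0:ℝ) < G.degree y := by exact_mod_cast hdpos y
    exact Real.sqrt_pos.mpr (by positivity)
  have hminpos : ∀ x y : V, (0:ℝ) < min (G.degree x : ℝ) (G.degree y : ℝ) := by
    intro x y
    exact lt_min (by exact_mod_cast hdpos x) (by exact_mod_cast hdpos y)
  have hminΔ : ∀ x y : V, min (G.degree x : ℝ) (G.degree y : ℝ) ≤ G.maxDegree :=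
    fun x y => le_trans (min_le_left _ _) (by exact_mod_cast G.degree_le_maxDegree x)
  have hδmin : ∀ x y : V, (G.minDegree : ℝ) ≤ min (G.degree x : ℝ) (G.degree y : ℝ) :=
    fun x y => le_min (by exact_mod_cast G.minDegree_le_degree x)
      (by exact_mod_cast G.minDegree_le_degree y)
  have hA : ∀ x y : V,
      (1:ℝ) / G.maxDegree * Real.sqrt ((G.degree x : ℝ) ^ 2 + (G.degree y : ℝ) ^ 2) ≤
      Real.sqrt ((G.degree x : ℝ) ^ 2 + (G.degree y : ℝ) ^ 2) /
        min (G.degree x : ℝ) (G.degree y : ℝ) := by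
    intro x y
    rw [one_div_mul_eq_div]
    exact div_le_div_of_nonneg_left (hsq x y).le (hminpos x y) (hminΔ x y)
  have hB : ∀ x y : V,
      Real.sqrt ((G.degree x : ℝ) ^ 2 + (G.degree y : ℝ) ^ 2) /
        min (G.degree x : ℝ) (G.degree y : ℝ) ≤
      (1:ℝ) / G.minDegree * Real.sqrt ((G.degree x : ℝ) ^ 2 + (G.degree y : ℝ) ^ 2) := by
    intro x y
    rw [one_div_mul_eq_div]
    exact div_le_div_of_nonneg_left (hsq x y).le hδR (hδmin x y)
  have hminEq : ∀ (x y : V) (c : ℝ), 0 < c →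
      Real.sqrt ((G.degree x : ℝ) ^ 2 + (G.degree y : ℝ) ^ 2) /
        min (G.degree x : ℝ) (G.degree y : ℝ) =
      Real.sqrt ((G.degree x : ℝ) ^ 2 + (G.degree y : ℝ) ^ 2) / c →
      min (G.degree x : ℝ) (G.degree y : ℝ) = c := by
    intro x y c hc h
    have h2 := (div_eq_div_iff (hminpos x y).ne' hc.ne').mp h
    have h3 := mul_left_cancel₀ (hsq x y).ne' (by linarith :
      Real.sqrt ((G.degree x : ℝ) ^ 2 + (G.degree y : ℝ) ^ 2) * c =
      Real.sqrt ((G.degree x : ℝ) ^ 2 + (G.degree y : ℝ) ^ 2) *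
        min (G.degree x : ℝ) (G.degree y : ℝ))
    linarith
  rw [SO_eq, HSO_eq, IsRegularGraph_iff]
  refine ⟨?_, ?_, ?_, ?_⟩
  · rw [Finset.mul_sum]
    refine Finset.sum_le_sum fun e he => ?_
    induction e using Sym2.ind with
    | _ x y => simpa only [Sym2.lift_mk] using hA x y
  · rw [Finset.mul_sum]
    refine Finset.sum_le_sum fun e he => ?_
    induction e using Sym2.ind with
    | _ x y => simpa only [Sym2.lift_mk] using hB x y
  · constructor
    · intro h
      rw [Finset.mul_sum] at h
      have key := (Finset.sum_eq_sum_iff_of_le ?hle).mp h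
      case hle =>
        intro e he
        induction e using Sym2.ind with
        | _ x y => simpa only [Sym2.lift_mk] using hA x y
      refine ⟨G.maxDegree, fun v => ?_⟩
      obtain ⟨w, hw⟩ := hadj v
      have hkey := key _ (mem_edgeFinset.mpr ((mem_edgeSet G).mpr hw))
      simp only [Sym2.lift_mk] at hkey
      rw [one_div_mul_eq_div] at hkey
      have hmin := hminEq v w _ hΔR hkey.symm
      have h1 : (G.maxDegree : ℝ) ≤ G.degree v := hmin ▸ min_le_left _ _
      have h2 : (G.degree v : ℝ) ≤ G.maxDegree := by exact_mod_cast G.degree_le_maxDegree v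
      exact_mod_cast le_antisymm h2 h1
    · rintro ⟨k, hk⟩
      have hΔk : G.maxDegree = k :=
        le_antisymm (G.maxDegree_le_of_forall_degree_le k fun v => (hk v).le)
          (hk (Classical.arbitrary V) ▸ G.degree_le_maxDegree _)
      rw [Finset.mul_sum]
      refine Finset.sum_congr rfl fun e he => ?_
      induction e using Sym2.ind with
      | _ x y =>
        simp only [Sym2.lift_mk]
        rw [hk x, hk y, hΔk, min_self, one_div_mul_eq_div]
  · constructor
    · intro h
      rw [Finset.mul_sum] at h
      have key := (Finset.sum_eq_sum_iff_of_le ?hle2).mp h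
      case hle2 =>
        intro e he
        induction e using Sym2.ind with
        | _ x y => simpa only [Sym2.lift_mk] using hB x y
      intro u v huv
      have hkey := key _ (mem_edgeFinset.mpr ((mem_edgeSet G).mpr huv))
      simp only [Sym2.lift_mk] at hkey
      rw [one_div_mul_eq_div] at hkey
      have hmin := hminEq u v _ hδR hkey
      rcases min_cases (G.degree u : ℝ) (G.degree v : ℝ) with ⟨h1, _⟩ | ⟨h1, _⟩
      · left; exact_mod_cast h1 ▸ hmin
      · right; exact_mod_cast h1 ▸ hmin
    · intro h
      rw [Finset.mul_sum]
      refine Finset.sum_congr rfl fun e he => ?_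
      induction e using Sym2.ind with
      | _ x y =>
        simp only [Sym2.lift_mk]
        have hxy := hmem he
        have hmin : min (G.degree x : ℝ) (G.degree y : ℝ) = G.minDegree := by
          rcases h x y hxy with h1 | h1
          · rw [min_eq_left]
            · exact_mod_cast h1
            · rw [h1]; exact_mod_cast G.minDegree_le_degree y
          · rw [min_eq_right]
            · exact_mod_cast h1
            · rw [h1]; exact_mod_cast G.minDegree_le_degree x
        rw [hmin, one_div_mul_eq_div]
end

section
/- For any connected graph G of order at least 2 with maximum degree Δ, HSO(G) ≥ M₁(G)/(√2·Δ), with equality if and only if G is regular. -/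
open SimpleGraph Finset Real

/-! Edge by edge, `d u + d v ≤ √2 · √(d u ² + d v ²)` and `min (d u) (d v) ≤ Δ`, so each term of
`M₁ / (√2 Δ)` is at most the corresponding term of `HSO`. Equality on an edge forces
`min (d u) (d v) = Δ`, i.e. both endpoints have degree `Δ`. In a connected graph every vertex
lies on an edge unless it is the only vertex, so equality everywhere means `G` is `Δ`-regular. -/

namespace Real

theorem add_le_sqrt_two_mul_sqrt_sq_add_sq (a b : ℝ) : a + b ≤ √2 * √(a ^ 2 + b ^ 2) := by
  rw [← sqrt_mul zero_le_two]
  exact le_sqrt_of_sq_le (by nlinarith [sq_nonneg (a - b)])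

theorem add_div_sqrt_two_mul_le_sqrt_sq_add_sq_div (a b : ℝ) {D : ℝ} (hD : 0 < D) :
    (a + b) / (√2 * D) ≤ √(a ^ 2 + b ^ 2) / D := by
  rw [← div_div, div_le_div_iff_of_pos_right hD, div_le_iff₀ (by positivity), mul_comm]
  exact add_le_sqrt_two_mul_sqrt_sq_add_sq a b

theorem add_div_sqrt_two_mul_le_sqrt_sq_add_sq_div_min {a b D : ℝ} (hmin : 0 < min a b)
    (hD : min a b ≤ D) : (a + b) / (√2 * D) ≤ √(a ^ 2 + b ^ 2) / min a b :=
  (add_div_sqrt_two_mul_le_sqrt_sq_add_sq_div a b (hmin.trans_le hD)).trans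
    (div_le_div_of_nonneg_left (sqrt_nonneg _) hmin hD)

theorem add_div_sqrt_two_mul_eq_sqrt_sq_add_sq_div_min_iff {a b D : ℝ} (hmin : 0 < min a b)
    (hD : max a b ≤ D) : (a + b) / (√2 * D) = √(a ^ 2 + b ^ 2) / min a b ↔ a = D ∧ b = D := by
  constructor
  · intro h
    have ha : 0 < a := hmin.trans_le (min_le_left a b)
    have hminD : min a b = D := by
      refine (min_le_max.trans hD).eq_of_not_lt fun hlt => h.not_lt ?_
      calc (a + b) / (√2 * D) ≤ √(a ^ 2 + b ^ 2) / D :=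
            add_div_sqrt_two_mul_le_sqrt_sq_add_sq_div a b (hmin.trans hlt)
        _ < √(a ^ 2 + b ^ 2) / min a b := div_lt_div_of_pos_left (by positivity) hmin hlt
    exact ⟨((le_max_left a b).trans hD).antisymm (hminD ▸ min_le_left a b),
      ((le_max_right a b).trans hD).antisymm (hminD ▸ min_le_right a b)⟩
  · rintro ⟨rfl, rfl⟩
    rw [min_self] at hmin ⊢
    have hsqrt : √(b ^ 2 + b ^ 2) = √2 * b := by
      rw [← two_mul, sqrt_mul zero_le_two, sqrt_sq hmin.le]
    have h2 : √2 * √2 = 2 := mul_self_sqrt zero_le_two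
    rw [hsqrt]
    field_simp
    linarith

end Real

namespace SimpleGraph

variable {V : Type*} [Fintype V] {G : SimpleGraph V} [DecidableRel G.Adj]

theorem Adj.degree_add_div_le {u v : V} (huv : G.Adj u v) :
    ((G.degree u : ℝ) + G.degree v) / (√2 * G.maxDegree) ≤
      √((G.degree u : ℝ) ^ 2 + (G.degree v : ℝ) ^ 2) / min (G.degree u : ℝ) (G.degree v) :=
  Real.add_div_sqrt_two_mul_le_sqrt_sq_add_sq_div_min
    (lt_min (by exact_mod_cast huv.degree_pos_left) (by exact_mod_cast huv.degree_pos_right))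
    (min_le_left _ _ |>.trans (by exact_mod_cast G.degree_le_maxDegree u))

theorem Adj.degree_add_div_eq_iff {u v : V} (huv : G.Adj u v) :
    ((G.degree u : ℝ) + G.degree v) / (√2 * G.maxDegree) =
        √((G.degree u : ℝ) ^ 2 + (G.degree v : ℝ) ^ 2) / min (G.degree u : ℝ) (G.degree v) ↔
      G.degree u = G.maxDegree ∧ G.degree v = G.maxDegree := by
  rw [Real.add_div_sqrt_two_mul_eq_sqrt_sq_add_sq_div_min_iff
    (lt_min (by exact_mod_cast huv.degree_pos_left) (by exact_mod_cast huv.degree_pos_right))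
    (max_le (by exact_mod_cast G.degree_le_maxDegree u) (by exact_mod_cast G.degree_le_maxDegree v))]
  norm_cast

variable (G)

theorem M1_div_le_HSO : M1 G / (√2 * G.maxDegree) ≤ HSO G := by
  obtain rfl : ‹DecidableRel G.Adj› = Classical.decRel G.Adj := Subsingleton.elim _ _
  classical
  rw [M1, HSO, sum_div]
  refine sum_le_sum fun e he => ?_
  induction e using Sym2.ind with
  | _ u v => exact (G.mem_edgeFinset.mp he).degree_add_div_le

theorem HSO_eq_M1_div_iff :
    HSO G = M1 G / (√2 * G.maxDegree) ↔ ∀ ⦃u v⦄, G.Adj u v → G.degree u = G.maxDegree := by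
  obtain rfl : ‹DecidableRel G.Adj› = Classical.decRel G.Adj := Subsingleton.elim _ _
  classical
  rw [eq_comm, M1, HSO, sum_div]
  refine (sum_eq_sum_iff_of_le fun e he => ?_).trans ?_
  · induction e using Sym2.ind with
    | _ u v => exact (G.mem_edgeFinset.mp he).degree_add_div_le
  simp only [Sym2.forall, mem_edgeFinset, mem_edgeSet, Sym2.lift_mk]
  exact ⟨fun h u v huv => (huv.degree_add_div_eq_iff.mp (h u v huv)).1,
    fun h u v huv => huv.degree_add_div_eq_iff.mpr ⟨h huv, h huv.symm⟩⟩

theorem isRegularGraph_iff : IsRegularGraph G ↔ ∃ k, G.IsRegularOfDegree k := by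
  obtain rfl : ‹DecidableRel G.Adj› = Classical.decRel G.Adj := Subsingleton.elim _ _
  rfl

variable {G}

theorem IsRegularOfDegree.degree_eq_maxDegree {k : ℕ} (hk : G.IsRegularOfDegree k) (v : V) :
    G.degree v = G.maxDegree :=
  haveI : Nonempty V := ⟨v⟩
  (hk v).trans hk.maxDegree_eq.symm

theorem Connected.isRegularOfDegree_maxDegree (hconn : G.Connected)
    (h : ∀ ⦃u v⦄, G.Adj u v → G.degree u = G.maxDegree) : G.IsRegularOfDegree G.maxDegree := by
  have := hconn.nonempty
  obtain ⟨v, hv⟩ := G.exists_maximal_degree_vertex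
  intro w
  obtain ⟨p⟩ := hconn w v
  cases p with
  | nil => exact hv.symm
  | cons hadj _ => exact h hadj

end SimpleGraph

theorem stmt2_general {V : Type*} [Fintype V] (G : SimpleGraph V) [DecidableRel G.Adj]
    (hconn : G.Connected) :
    M1 G / (Real.sqrt 2 * G.maxDegree) ≤ HSO G ∧
    (HSO G = M1 G / (Real.sqrt 2 * G.maxDegree) ↔ IsRegularGraph G) := by
  refine ⟨G.M1_div_le_HSO, ?_⟩
  rw [G.HSO_eq_M1_div_iff, G.isRegularGraph_iff]
  exact ⟨fun h => ⟨_, hconn.isRegularOfDegree_maxDegree h⟩,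
    fun ⟨_, hk⟩ u _ _ => hk.degree_eq_maxDegree u⟩

theorem stmt2 {V : Type*} [Fintype V] (G : SimpleGraph V) [DecidableRel G.Adj]
    (hconn : G.Connected) (hn : 2 ≤ Fintype.card V) :
    M1 G / (Real.sqrt 2 * G.maxDegree) ≤ HSO G ∧
    (HSO G = M1 G / (Real.sqrt 2 * G.maxDegree) ↔ IsRegularGraph G) :=
  stmt2_general G hconn
end

section
/- Let G be a graph with minimum degree at least 1, and let u and v be non-adjacent vertices of G such that d(u) ≥ d(u′) for every neighbor u′ of u, and d(v) ≥ d(v′) for every neighbor v′ of v. Then HSO(G + uv) > HSO(G). -/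
open SimpleGraph Finset Real

/-! The edge weight `√(a² + b²) / min a b` is increasing in the larger argument `a` as long as
the smaller one `b` is fixed. Adding `uv` raises only the degrees of `u` and `v`, and by
hypothesis each of them is the larger endpoint of every old edge through it, while the other
endpoint of such an edge keeps its degree (`u` and `v` are not adjacent). So no old edge loses
weight, and the new edge `uv` contributes a positive amount. -/

noncomputable def hsoWeight (a b : ℝ) : ℝ := √(a ^ 2 + b ^ 2) / min a b

lemma hsoWeight_comm (a b : ℝ) : hsoWeight a b = hsoWeight b a := by
  rw [hsoWeight, hsoWeight, add_comm, min_comm]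

lemma hsoWeight_pos {a b : ℝ} (ha : 0 < a) (hb : 0 < b) : 0 < hsoWeight a b := by
  unfold hsoWeight; positivity

lemma hsoWeight_le_hsoWeight_left {a a' b : ℝ} (hb : 0 ≤ b) (hba : b ≤ a) (ha : a ≤ a') :
    hsoWeight a b ≤ hsoWeight a' b := by
  unfold hsoWeight
  rw [min_eq_right hba, min_eq_right (hba.trans ha)]
  gcongr
  exact hb.trans hba

namespace SimpleGraph

variable {V : Type*}

lemma degree_sup_edge_of_ne {G : SimpleGraph V} {s t w : V} (hs : w ≠ s) (ht : w ≠ t)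
    [Fintype (G.neighborSet w)] [Fintype ((G ⊔ edge s t).neighborSet w)] :
    (G ⊔ edge s t).degree w = G.degree w := by
  unfold degree
  congr 1
  ext x
  simp [edge_adj, hs, ht]

section EdgeWeight

variable (G : SimpleGraph V) [∀ v, Fintype (G.neighborSet v)]

noncomputable def hsoEdgeWeight : Sym2 V → ℝ :=
  Sym2.lift ⟨fun x y => hsoWeight (G.degree x) (G.degree y), fun _ _ => hsoWeight_comm _ _⟩

@[simp]
lemma hsoEdgeWeight_mk (x y : V) :
    G.hsoEdgeWeight s(x, y) = hsoWeight (G.degree x) (G.degree y) := rfl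

lemma HSO_eq_sum_hsoEdgeWeight [Fintype V] [Fintype G.edgeSet] :
    HSO G = ∑ e ∈ G.edgeFinset, G.hsoEdgeWeight e := by
  unfold HSO
  refine Finset.sum_congr (by congr!) fun e _ => ?_
  induction e using Sym2.ind
  simp only [Sym2.lift_mk, hsoEdgeWeight_mk, hsoWeight]
  congr!

lemma hsoEdgeWeight_pos_of_adj {x y : V} (h : G.Adj x y) : 0 < G.hsoEdgeWeight s(x, y) :=
  hsoWeight_pos (mod_cast h.degree_pos_left) (mod_cast h.degree_pos_right)

end EdgeWeight

section SupEdge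

variable {G : SimpleGraph V} [∀ v, Fintype (G.neighborSet v)] {s t : V}
  [∀ v, Fintype ((G ⊔ edge s t).neighborSet v)]

lemma hsoWeight_degree_le_sup_edge_of_endpoint (hn : ¬G.Adj s t)
    (hs : ∀ w, G.Adj s w → G.degree w ≤ G.degree s)
    (ht : ∀ w, G.Adj t w → G.degree w ≤ G.degree t) {x y : V} (hx : x = s ∨ x = t)
    (hxy : G.Adj x y) :
    hsoWeight (G.degree x) (G.degree y) ≤
      hsoWeight ((G ⊔ edge s t).degree x) ((G ⊔ edge s t).degree y) := by
  have hy : y ≠ s ∧ y ≠ t := by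
    rcases hx with rfl | rfl
    · exact ⟨hxy.ne.symm, fun h => hn (h ▸ hxy)⟩
    · exact ⟨fun h => hn (h ▸ hxy).symm, hxy.ne.symm⟩
  have hyx : G.degree y ≤ G.degree x := by
    rcases hx with rfl | rfl
    exacts [hs y hxy, ht y hxy]
  rw [degree_sup_edge_of_ne hy.1 hy.2]
  exact hsoWeight_le_hsoWeight_left (Nat.cast_nonneg _) (mod_cast hyx)
    (mod_cast degree_le_of_le le_sup_left)

lemma hsoEdgeWeight_le_sup_edge (hn : ¬G.Adj s t)
    (hs : ∀ w, G.Adj s w → G.degree w ≤ G.degree s)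
    (ht : ∀ w, G.Adj t w → G.degree w ≤ G.degree t) {e : Sym2 V} (he : e ∈ G.edgeSet) :
    G.hsoEdgeWeight e ≤ (G ⊔ edge s t).hsoEdgeWeight e := by
  induction e using Sym2.ind with
  | h x y =>
    rw [mem_edgeSet] at he
    simp only [hsoEdgeWeight_mk]
    by_cases hx : x = s ∨ x = t
    · exact hsoWeight_degree_le_sup_edge_of_endpoint hn hs ht hx he
    by_cases hy : y = s ∨ y = t
    · rw [hsoWeight_comm, hsoWeight_comm ((G ⊔ edge s t).degree x)]
      exact hsoWeight_degree_le_sup_edge_of_endpoint hn hs ht hy he.symm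
    simp only [not_or] at hx hy
    rw [degree_sup_edge_of_ne hx.1 hx.2, degree_sup_edge_of_ne hy.1 hy.2]

end SupEdge

end SimpleGraph

theorem stmt4_general {V : Type*} [Fintype V] (G : SimpleGraph V) [DecidableRel G.Adj]
    (u v : V) (huv : u ≠ v) (hnadj : ¬ G.Adj u v)
    (hNu : ∀ w, G.Adj u w → G.degree w ≤ G.degree u)
    (hNv : ∀ w, G.Adj v w → G.degree w ≤ G.degree v) :
    HSO G < HSO (addEdge G u v) := by
  classical
  have hnew : 0 < (G ⊔ edge u v).hsoEdgeWeight s(u, v) :=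
    hsoEdgeWeight_pos_of_adj _ (by simp [edge_adj, huv])
  have hold : ∑ e ∈ G.edgeFinset, G.hsoEdgeWeight e ≤
      ∑ e ∈ G.edgeFinset, (G ⊔ edge u v).hsoEdgeWeight e :=
    sum_le_sum fun e he => hsoEdgeWeight_le_sup_edge hnadj hNu hNv (mem_edgeFinset.mp he)
  rw [HSO_eq_sum_hsoEdgeWeight G, addEdge, ← edge, HSO_eq_sum_hsoEdgeWeight,
    G.edgeFinset_sup_edge hnadj huv, sum_cons]
  linarith

theorem stmt4 {V : Type*} [Fintype V] (G : SimpleGraph V) [DecidableRel G.Adj]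
    (hδ : 1 ≤ G.minDegree)
    (u v : V) (huv : u ≠ v) (hnadj : ¬ G.Adj u v)
    (hNu : ∀ w, G.Adj u w → G.degree w ≤ G.degree u)
    (hNv : ∀ w, G.Adj v w → G.degree w ≤ G.degree v) :
    HSO G < HSO (addEdge G u v) :=
  stmt4_general G u v huv hnadj hNu hNv
end

section
/- For all integers i, j, n with n ≥ 3, 1 ≤ i ≤ j ≤ n−1 and (i, j) ≠ (1, n−1): j·n·√(i² + j²) < (i + j)(n−1)·√((n−1)² + 1). -/
open SimpleGraph Finset Real

theorem stmt8 (i j n : ℕ) (hn : 3 ≤ n) (hi : 1 ≤ i) (hij : i ≤ j) (hj : j ≤ n - 1)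
    (hne : ¬(i = 1 ∧ j = n - 1)) :
    (j : ℝ) * n * Real.sqrt ((i : ℝ) ^ 2 + (j : ℝ) ^ 2) <
      ((i : ℝ) + j) * ((n : ℝ) - 1) * Real.sqrt (((n : ℝ) - 1) ^ 2 + 1) := by
  have h3 : (3:ℝ) ≤ (n:ℝ) := by exact_mod_cast hn
  have hi1 : (1:ℝ) ≤ (i:ℝ) := by exact_mod_cast hi
  have hijR : (i:ℝ) ≤ (j:ℝ) := by exact_mod_cast hij
  have hjm : (j:ℝ) ≤ (n:ℝ) - 1 := by
    have h1 : 1 ≤ n := by omega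
    have : (j:ℝ) ≤ ((n-1 : ℕ) : ℝ) := by exact_mod_cast hj
    rwa [Nat.cast_sub h1, Nat.cast_one] at this
  set m : ℝ := (n:ℝ) - 1 with hm
  have hm2 : (2:ℝ) ≤ m := by simp [hm]; linarith
  -- key: j < i * m
  have key : (j:ℝ) < i * m := by
    rcases Nat.lt_or_ge i 2 with h2 | h2
    · have hi1' : i = 1 := by omega
      have hjn : j ≤ n - 2 := by omega
      have hjm1 : (j:ℝ) ≤ m - 1 := by
        have h2n : 2 ≤ n := by omega
        have : (j:ℝ) ≤ ((n-2:ℕ):ℝ) := by exact_mod_cast hjn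
        rw [Nat.cast_sub h2n] at this
        push_cast at this
        simp [hm]; linarith
      rw [hi1']; push_cast; linarith
    · have h2R : (2:ℝ) ≤ (i:ℝ) := by exact_mod_cast h2
      nlinarith
  have hkey2 : (0:ℝ) < (j:ℝ) * m - i := by nlinarith
  have hkey1 : (0:ℝ) < (i:ℝ) * m - j := by linarith
  have hnm : (n:ℝ) = m + 1 := by simp [hm]
  have hL : (j:ℝ) * n * Real.sqrt ((i:ℝ)^2 + (j:ℝ)^2)
      = Real.sqrt (((j:ℝ)*n)^2 * ((i:ℝ)^2 + (j:ℝ)^2)) := by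
    rw [Real.sqrt_mul (by positivity), Real.sqrt_sq (by positivity)]
  have hR : ((i:ℝ)+j) * m * Real.sqrt (m^2+1)
      = Real.sqrt ((((i:ℝ)+j)*m)^2 * (m^2+1)) := by
    rw [Real.sqrt_mul (by positivity), Real.sqrt_sq (by positivity)]
  rw [hL, hR]
  apply Real.sqrt_lt_sqrt (by positivity)
  rw [hnm]
  nlinarith [mul_pos hkey2 hkey1, sq_nonneg m,
    mul_nonneg (mul_nonneg (sub_nonneg.2 hjm) (by positivity : (0:ℝ) ≤ m + j))
      (by positivity : (0:ℝ) ≤ ((m+1)^2) * ((i:ℝ)^2 + (j:ℝ)^2)),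
    mul_pos (mul_pos hkey2 hkey1) (by positivity : (0:ℝ) < m^2)]
end

section
/- If G is a connected graph of order n ≥ 3, then HSO(C_n) ≤ HSO(G) ≤ HSO(S_n), i.e., √2·n ≤ HSO(G) ≤ (n−1)·√((n−1)² + 1), with left equality iff G ≅ C_n and right equality iff G ≅ S_n. -/
open SimpleGraph Finset Real

section RealLemmas
variable {a b c : ℝ}

lemma poly1 (ha : 1 ≤ a) (hab : a ≤ b) :
    (a^2+b^2)*(1+b)^2 ≤ (1+b^2)*(a+b)^2 := by
  nlinarith [mul_nonneg (mul_nonneg (by linarith : (0:ℝ) ≤ b) (by linarith : (0:ℝ) ≤ a - 1))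
    (by nlinarith : (0:ℝ) ≤ b^2 - a)]

lemma poly1s (ha : 1 < a) (hab : a ≤ b) :
    (a^2+b^2)*(1+b)^2 < (1+b^2)*(a+b)^2 := by
  nlinarith [mul_pos (mul_pos (by linarith : (0:ℝ) < b) (by linarith : (0:ℝ) < a - 1))
    (by nlinarith : (0:ℝ) < b^2 - a)]

lemma poly2 (hb : 1 ≤ b) (hbc : b ≤ c) :
    b^2*(1+b^2)*(1+c)^2 ≤ c^2*(1+c^2)*(1+b)^2 := by
  have big : (0:ℝ) ≤ (b+c+b*c)*(c^2*(1+b)+b^2*(1+c)) :=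
    mul_nonneg (by nlinarith) (by nlinarith)
  have bc0 : (0:ℝ) ≤ b*c := by nlinarith
  nlinarith [mul_nonneg (by linarith : (0:ℝ) ≤ c - b)
    (by nlinarith : (0:ℝ) ≤ (c+b+2*b*c) + (b+c+b*c)*(c^2*(1+b)+b^2*(1+c)))]

lemma poly2s (hb : 1 ≤ b) (hbc : b < c) :
    b^2*(1+b^2)*(1+c)^2 < c^2*(1+c^2)*(1+b)^2 := by
  have big : (0:ℝ) ≤ (b+c+b*c)*(c^2*(1+b)+b^2*(1+c)) :=
    mul_nonneg (by nlinarith) (by nlinarith)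
  have bc0 : (0:ℝ) ≤ b*c := by nlinarith
  nlinarith [mul_pos (by linarith : (0:ℝ) < c - b)
    (by nlinarith : (0:ℝ) < (c+b+2*b*c) + (b+c+b*c)*(c^2*(1+b)+b^2*(1+c)))]

lemma polyT (ha : 1 ≤ a) (hab : a ≤ b) (hbc : b ≤ c) :
    (a^2+b^2)*((c+1)*b)^2 ≤ (1+c^2)*(c*(a+b))^2 := by
  have hb : 1 ≤ b := le_trans ha hab
  have h1 := poly1 ha hab
  have h2 := poly2 hb hbc
  have key : (a^2+b^2)*((c+1)*b)^2 * (1+b)^2 ≤ (1+c^2)*(c*(a+b))^2 * (1+b)^2 := by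
    calc (a^2+b^2)*((c+1)*b)^2 * (1+b)^2 = ((a^2+b^2)*(1+b)^2) * (b^2*(c+1)^2) := by ring
    _ ≤ ((1+b^2)*(a+b)^2) * (b^2*(c+1)^2) := by
        apply mul_le_mul_of_nonneg_right h1; positivity
    _ = (b^2*(1+b^2)*(1+c)^2) * (a+b)^2 := by ring
    _ ≤ (c^2*(1+c^2)*(1+b)^2) * (a+b)^2 := by
        apply mul_le_mul_of_nonneg_right h2; positivity
    _ = (1+c^2)*(c*(a+b))^2 * (1+b)^2 := by ring
  have hpos : (0:ℝ) < (1+b)^2 := by positivity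
  exact le_of_mul_le_mul_right key hpos

lemma polyTs (ha : 1 ≤ a) (hab : a ≤ b) (hbc : b ≤ c) (hne : 1 < a ∨ b < c) :
    (a^2+b^2)*((c+1)*b)^2 < (1+c^2)*(c*(a+b))^2 := by
  have hb : 1 ≤ b := le_trans ha hab
  have key : (a^2+b^2)*((c+1)*b)^2 * (1+b)^2 < (1+c^2)*(c*(a+b))^2 * (1+b)^2 := by
    rcases hne with h | h
    · calc (a^2+b^2)*((c+1)*b)^2 * (1+b)^2 = ((a^2+b^2)*(1+b)^2) * (b^2*(c+1)^2) := by ring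
      _ < ((1+b^2)*(a+b)^2) * (b^2*(c+1)^2) := by
          exact mul_lt_mul_of_pos_right (poly1s h hab)
            (mul_pos (by nlinarith) (by nlinarith))
      _ = (b^2*(1+b^2)*(1+c)^2) * (a+b)^2 := by ring
      _ ≤ (c^2*(1+c^2)*(1+b)^2) * (a+b)^2 := by
          apply mul_le_mul_of_nonneg_right (poly2 hb hbc); positivity
      _ = (1+c^2)*(c*(a+b))^2 * (1+b)^2 := by ring
    · calc (a^2+b^2)*((c+1)*b)^2 * (1+b)^2 = ((a^2+b^2)*(1+b)^2) * (b^2*(c+1)^2) := by ring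
      _ ≤ ((1+b^2)*(a+b)^2) * (b^2*(c+1)^2) := by
          apply mul_le_mul_of_nonneg_right (poly1 ha hab); positivity
      _ = (b^2*(1+b^2)*(1+c)^2) * (a+b)^2 := by ring
      _ < (c^2*(1+c^2)*(1+b)^2) * (a+b)^2 := by
          exact mul_lt_mul_of_pos_right (poly2s hb h) (by positivity)
      _ = (1+c^2)*(c*(a+b))^2 * (1+b)^2 := by ring
  have hpos : (0:ℝ) < (1+b)^2 := by positivity
  exact lt_of_mul_lt_mul_right key (le_of_lt hpos)

/-- the per-edge term -/
noncomputable def term (a b : ℝ) : ℝ := Real.sqrt (a^2+b^2) / min a b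

lemma term_comm (a b : ℝ) : term a b = term b a := by simp [term, add_comm, min_comm]

lemma term_lb (ha : 1 ≤ a) (hb : 1 ≤ b) : Real.sqrt 2 ≤ term a b := by
  have h0 : (0:ℝ) < min a b := lt_min (by linarith) (by linarith)
  rw [term, le_div_iff₀ h0]
  have : Real.sqrt 2 * min a b = Real.sqrt (2 * (min a b)^2) := by
    rw [Real.sqrt_mul (by norm_num), Real.sqrt_sq h0.le]
  rw [this]
  apply Real.sqrt_le_sqrt
  rcases le_total a b with h | h
  · rw [min_eq_left h]; nlinarith
  · rw [min_eq_right h]; nlinarith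

lemma term_self (ha : 0 < a) : term a a = Real.sqrt 2 := by
  rw [term, min_self]
  rw [show a^2+a^2 = 2*a^2 by ring, Real.sqrt_mul (by norm_num), Real.sqrt_sq ha.le]
  field_simp

lemma term_lb_eq (ha : 1 ≤ a) (hb : 1 ≤ b) (h : term a b = Real.sqrt 2) : a = b := by
  have h0 : (0:ℝ) < min a b := lt_min (by linarith) (by linarith)
  rw [term, div_eq_iff h0.ne'] at h
  have := congrArg (· ^ 2) h
  rw [Real.sq_sqrt (by positivity), mul_pow, Real.sq_sqrt (by norm_num)] at this
  rcases le_total a b with hab | hab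
  · rw [min_eq_left hab] at this; nlinarith
  · rw [min_eq_right hab] at this; nlinarith

lemma term_one (hb : 1 ≤ b) : term 1 b = Real.sqrt (1 + b^2) := by
  rw [term, min_eq_left hb, one_pow]; simp

lemma term_lb5 (hb : 2 ≤ b) : Real.sqrt 5 ≤ term 1 b := by
  rw [term_one (by linarith)]
  apply Real.sqrt_le_sqrt; nlinarith

lemma term_ub (ha : 1 ≤ a) (hab : a ≤ b) (hbc : b ≤ c) :
    term a b ≤ (c * Real.sqrt (1+c^2) / (c+1)) * (1/a + 1/b) := by
  have hpa : (0:ℝ) < a := by linarith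
  have hpb : (0:ℝ) < b := by linarith
  have hpc : (0:ℝ) < c := by linarith
  rw [term, min_eq_left hab, div_le_iff₀ hpa]
  have hrw : (c * Real.sqrt (1+c^2) / (c+1)) * (1/a + 1/b) * a
      = (Real.sqrt (1+c^2) * (c*(a+b))) / ((c+1) * b) := by
    field_simp; ring
  rw [hrw, le_div_iff₀ (by positivity)]
  have e1 : Real.sqrt (a^2+b^2) * ((c+1)*b) = Real.sqrt ((a^2+b^2) * ((c+1)*b)^2) := by
    rw [Real.sqrt_mul (by positivity), Real.sqrt_sq (by positivity)]
  have e2 : Real.sqrt (1+c^2) * (c*(a+b)) = Real.sqrt ((1+c^2) * (c*(a+b))^2) := by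
    rw [Real.sqrt_mul (by positivity), Real.sqrt_sq (by positivity)]
  rw [e1, e2]
  exact Real.sqrt_le_sqrt (polyT ha hab hbc)

lemma term_ub_eq (ha : 1 ≤ a) (hab : a ≤ b) (hbc : b ≤ c)
    (h : term a b = (c * Real.sqrt (1+c^2) / (c+1)) * (1/a + 1/b)) : a = 1 ∧ b = c := by
  by_contra hcon
  have hne : 1 < a ∨ b < c := by
    rcases lt_or_eq_of_le ha with h1 | h1
    · exact Or.inl h1
    rcases lt_or_eq_of_le hbc with h2 | h2
    · exact Or.inr h2
    exact absurd ⟨h1.symm, h2⟩ hcon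
  have hpa : (0:ℝ) < a := by linarith
  have hpb : (0:ℝ) < b := by linarith
  have hpc : (0:ℝ) < c := by linarith
  have hlt : term a b < (c * Real.sqrt (1+c^2) / (c+1)) * (1/a + 1/b) := by
    rw [term, min_eq_left hab, div_lt_iff₀ hpa]
    have hrw : (c * Real.sqrt (1+c^2) / (c+1)) * (1/a + 1/b) * a
        = (Real.sqrt (1+c^2) * (c*(a+b))) / ((c+1) * b) := by
      field_simp; ring
    rw [hrw, lt_div_iff₀ (by positivity)]
    have e1 : Real.sqrt (a^2+b^2) * ((c+1)*b) = Real.sqrt ((a^2+b^2) * ((c+1)*b)^2) := by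
      rw [Real.sqrt_mul (by positivity), Real.sqrt_sq (by positivity)]
    have e2 : Real.sqrt (1+c^2) * (c*(a+b)) = Real.sqrt ((1+c^2) * (c*(a+b))^2) := by
      rw [Real.sqrt_mul (by positivity), Real.sqrt_sq (by positivity)]
    rw [e1, e2]
    exact Real.sqrt_lt_sqrt (by positivity) (polyTs ha hab hbc hne)
  exact absurd h (ne_of_lt hlt)

lemma term_ub_val (hc : 1 ≤ c) :
    term 1 c = (c * Real.sqrt (1+c^2) / (c+1)) * (1/1 + 1/c) := by
  rw [term_one hc]
  have hpc : (0:ℝ) < c := by linarith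
  field_simp

end RealLemmas

section GraphSums
variable {V : Type*} [Fintype V] (G : SimpleGraph V) [DecidableRel G.Adj]

def dartEquivSigma : G.Dart ≃ Σ v : V, G.neighborSet v where
  toFun d := ⟨d.fst, d.snd, d.adj⟩
  invFun x := ⟨(x.1, x.2.1), x.2.2⟩
  left_inv d := by cases d; rfl
  right_inv x := rfl

lemma sum_darts_fst (f : V → V → ℝ) :
    ∑ d : G.Dart, f d.fst d.snd = ∑ v : V, ∑ u ∈ G.neighborFinset v, f v u := by
  classical
  rw [← Equiv.sum_comp (dartEquivSigma G).symm (fun d => f d.fst d.snd)]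
  rw [← Finset.univ_sigma_univ, Finset.sum_sigma]
  refine Finset.sum_congr rfl fun v _ => ?_
  have : ∀ s : G.neighborSet v,
      f ((dartEquivSigma G).symm ⟨v, s⟩).toProd.1 ((dartEquivSigma G).symm ⟨v, s⟩).toProd.2
        = f v (s : V) := fun s => rfl
  rw [Finset.sum_congr rfl (fun s _ => this s)]
  exact (Finset.sum_subtype (p := fun x => x ∈ G.neighborSet v) (G.neighborFinset v)
    (fun x => by simp) (fun u => f v u)).symm

lemma sum_darts_twice (f : V → V → ℝ) (hf : ∀ x y, f x y = f y x) :
    ∑ d : G.Dart, f d.fst d.snd = 2 * ∑ e ∈ G.edgeFinset, Sym2.lift ⟨f, hf⟩ e := by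
  classical
  have h1 : ∀ d : G.Dart, f d.fst d.snd = Sym2.lift ⟨f, hf⟩ d.edge := fun d => by
    rw [show d.edge = s(d.fst, d.snd) from rfl, Sym2.lift_mk]
  have himg : (univ : Finset G.Dart).image Dart.edge = G.edgeFinset := by
    ext e
    simp only [mem_image, mem_univ, true_and, mem_edgeFinset]
    constructor
    · rintro ⟨d, rfl⟩; exact d.edge_mem
    · intro he
      induction e with
      | _ u v => exact ⟨⟨(u, v), he⟩, rfl⟩
  calc ∑ d : G.Dart, f d.fst d.snd = ∑ d : G.Dart, Sym2.lift ⟨f, hf⟩ d.edge := by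
        simp only [h1]
  _ = ∑ e ∈ (univ : Finset G.Dart).image Dart.edge,
        #(univ.filter (fun d => Dart.edge d = e)) • Sym2.lift ⟨f, hf⟩ e :=
      Finset.sum_comp _ _
  _ = ∑ e ∈ G.edgeFinset, 2 * Sym2.lift ⟨f, hf⟩ e := by
      rw [himg]
      refine Finset.sum_congr rfl fun e he => ?_
      rw [G.dart_edge_fiber_card e (mem_edgeFinset.mp he), nsmul_eq_mul]
      norm_num
  _ = 2 * ∑ e ∈ G.edgeFinset, Sym2.lift ⟨f, hf⟩ e := by
      rw [← Finset.mul_sum]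

lemma sum_edges_eq (f : V → V → ℝ) (hf : ∀ x y, f x y = f y x) :
    ∑ e ∈ G.edgeFinset, Sym2.lift ⟨f, hf⟩ e
      = (1/2) * ∑ v : V, ∑ u ∈ G.neighborFinset v, f v u := by
  rw [← sum_darts_fst, sum_darts_twice G f hf]; ring

lemma sum_darts_snd_eq_fst (g : V → ℝ) :
    ∑ d : G.Dart, g d.snd = ∑ d : G.Dart, g d.fst := by
  exact Equiv.sum_comp (Dart.symm_involutive (G := G)).toPerm (fun d => g d.fst)

lemma sum_recip_degrees (hdeg : ∀ v : V, 0 < G.degree v) :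
    ∑ e ∈ G.edgeFinset, Sym2.lift
      ⟨fun x y => 1/(G.degree x : ℝ) + 1/(G.degree y : ℝ), fun x y => by ring⟩ e
      = (Fintype.card V : ℝ) := by
  rw [sum_edges_eq]
  have h1 : ∑ v : V, ∑ u ∈ G.neighborFinset v, (1/(G.degree v : ℝ) + 1/(G.degree u : ℝ))
      = ∑ d : G.Dart, (1/(G.degree d.fst : ℝ) + 1/(G.degree d.snd : ℝ)) :=
    (sum_darts_fst G _).symm
  rw [h1]
  have h2 : ∑ d : G.Dart, (1/(G.degree d.fst : ℝ) + 1/(G.degree d.snd : ℝ))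
      = 2 * ∑ d : G.Dart, 1/(G.degree d.fst : ℝ) := by
    rw [Finset.sum_add_distrib, sum_darts_snd_eq_fst G (fun v => 1/(G.degree v : ℝ))]
    ring
  rw [h2]
  have h3 : ∑ d : G.Dart, 1/(G.degree d.fst : ℝ) = (Fintype.card V : ℝ) := by
    rw [sum_darts_fst G (fun v _ => 1/(G.degree v : ℝ))]
    have : ∀ v : V, ∑ _u ∈ G.neighborFinset v, 1/(G.degree v : ℝ) = 1 := fun v => by
      rw [Finset.sum_const, G.card_neighborFinset_eq_degree]
      rw [nsmul_eq_mul, mul_one_div, div_self]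
      exact_mod_cast (hdeg v).ne'
    rw [Finset.sum_congr rfl (fun v _ => this v), Finset.sum_const, Finset.card_univ,
      nsmul_eq_mul, mul_one]
  rw [h3]; ring

end GraphSums

section Conn
variable {V : Type*} [Fintype V] {G : SimpleGraph V} [DecidableRel G.Adj]

lemma walk_closure {S : Set V} (hcl : ∀ a ∈ S, ∀ b, G.Adj a b → b ∈ S) :
    ∀ {a b : V} (_ : G.Walk a b), a ∈ S → b ∈ S := by
  intro a b p
  induction p with
  | nil => exact id
  | cons h q ih => exact fun ha => ih (hcl _ ha _ h)

lemma closure_eq_univ {S : Set V} (hcl : ∀ a ∈ S, ∀ b, G.Adj a b → b ∈ S)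
    (hconn : G.Connected) {v0 : V} (h0 : v0 ∈ S) : ∀ v, v ∈ S := fun v => by
  obtain ⟨p⟩ := hconn v0 v
  exact walk_closure hcl p h0

lemma conn_degree_pos (hconn : G.Connected) (hcard : 2 ≤ Fintype.card V) (v : V) :
    0 < G.degree v := by
  obtain ⟨w, hw⟩ := Fintype.exists_ne_of_one_lt_card (by omega) v
  obtain ⟨p⟩ := hconn v w
  cases p with
  | nil => exact absurd rfl hw.symm
  | cons h q => exact (G.degree_pos_iff_exists_adj v).mpr ⟨_, h⟩

lemma conn_const_degree (hconn : G.Connected)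
    (h : ∀ ⦃u v : V⦄, G.Adj u v → G.degree u = G.degree v) (u v : V) :
    G.degree u = G.degree v := by
  obtain ⟨p⟩ := hconn u v
  induction p with
  | nil => rfl
  | cons ha q ih => exact (h ha).trans ih

lemma conn_card_edges (hconn : G.Connected) :
    Fintype.card V - 1 ≤ #G.edgeFinset := by
  classical
  have hne : Nonempty V := hconn.nonempty
  obtain ⟨r⟩ := hne
  have key : ∀ v : V, v ≠ r → ∃ u, G.Adj v u ∧ G.dist u r < G.dist v r := by
    intro v hv
    obtain ⟨p, hp⟩ := hconn.exists_walk_length_eq_dist v r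
    cases p with
    | nil => exact absurd rfl hv
    | cons h q =>
      refine ⟨_, h, ?_⟩
      have h1 : G.dist _ r ≤ q.length := SimpleGraph.dist_le q
      have h2 : q.length + 1 = G.dist v r := by simpa using hp
      omega
  let f : V → V := fun v => if hv : v ≠ r then (key v hv).choose else v
  have hf : ∀ v (hv : v ≠ r), G.Adj v (f v) ∧ G.dist (f v) r < G.dist v r := by
    intro v hv
    simp only [f, dif_pos hv]
    exact (key v hv).choose_spec
  have hinj : Set.InjOn (fun v => s(v, f v)) (univ.erase r) := by
    intro v hv w hw heq
    simp only [Finset.coe_erase, Set.mem_diff, Set.mem_singleton_iff] at hv hw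
    have hv' : v ≠ r := hv.2
    have hw' : w ≠ r := hw.2
    rcases Sym2.eq_iff.mp heq with ⟨h1, _⟩ | ⟨h1, h2⟩
    · exact h1
    · exfalso
      have hv2 := (hf v hv').2
      have hw2 := (hf w hw').2
      rw [h2] at hv2
      rw [← h1] at hw2
      omega
  have hmap : ∀ v ∈ univ.erase r, s(v, f v) ∈ G.edgeFinset := by
    intro v hv
    have hv' : v ≠ r := (Finset.mem_erase.mp hv).1
    rw [mem_edgeFinset, mem_edgeSet]
    exact (hf v hv').1
  calc Fintype.card V - 1 = #(univ.erase r) := by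
        rw [Finset.card_erase_of_mem (mem_univ r), Finset.card_univ]
  _ ≤ #G.edgeFinset := Finset.card_le_card_of_injOn _ hmap hinj

lemma two_leaves (hconn : G.Connected) (h3 : 3 ≤ Fintype.card V)
    (hm : #G.edgeFinset = Fintype.card V - 1) :
    ∃ u₁ u₂ : V, u₁ ≠ u₂ ∧ G.degree u₁ = 1 ∧ G.degree u₂ = 1 := by
  classical
  set n := Fintype.card V with hn
  have hsum : ∑ v : V, G.degree v = 2 * (n - 1) := by
    rw [G.sum_degrees_eq_twice_card_edges, hm]
  set L := univ.filter (fun v => G.degree v = 1) with hL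
  have hdegpos : ∀ v : V, 1 ≤ G.degree v := fun v => conn_degree_pos hconn (by omega) v
  have h2L : 2 ≤ #L := by
    by_contra hcon
    push_neg at hcon
    have hLsub : L ⊆ univ := Finset.filter_subset _ _
    have hsplit : ∑ v ∈ univ \ L, G.degree v + ∑ v ∈ L, G.degree v = ∑ v : V, G.degree v :=
      Finset.sum_sdiff hLsub
    have hL1 : ∑ v ∈ L, G.degree v = #L := by
      rw [Finset.sum_congr rfl (fun v hv => (Finset.mem_filter.mp hv).2), Finset.sum_const,
        smul_eq_mul, mul_one]
    have hge2 : ∀ v ∈ univ \ L, 2 ≤ G.degree v := by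
      intro v hv
      have h1 := hdegpos v
      have h2 : G.degree v ≠ 1 := by
        intro h
        exact (Finset.mem_sdiff.mp hv).2 (Finset.mem_filter.mpr ⟨mem_univ v, h⟩)
      omega
    have hL2 : #(univ \ L) * 2 ≤ ∑ v ∈ univ \ L, G.degree v := by
      have := Finset.card_nsmul_le_sum (univ \ L) (fun v => G.degree v) 2 hge2
      simpa [smul_eq_mul] using this
    have hcards : #(univ \ L) = n - #L := by
      rw [Finset.card_sdiff_of_subset hLsub, Finset.card_univ]
    have hLle : #L ≤ n := by
      calc #L ≤ #(univ : Finset V) := Finset.card_le_card hLsub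
      _ = n := Finset.card_univ
    have h4 : (n - #L) * 2 ≤ ∑ v ∈ univ \ L, G.degree v := by rw [← hcards]; exact hL2
    have key : (n - #L) * 2 + #L ≤ 2 * (n - 1) := by
      rw [← hsum, ← hsplit]
      exact Nat.add_le_add h4 (le_of_eq hL1.symm)
    omega
  have h2L' : 1 < #L := by omega
  obtain ⟨a, ha, b, hb, hab⟩ := Finset.one_lt_card.mp h2L'
  exact ⟨a, b, hab, (Finset.mem_filter.mp ha).2, (Finset.mem_filter.mp hb).2⟩

lemma leaf_nbr (hconn : G.Connected) (h3 : 3 ≤ Fintype.card V) {u : V}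
    (hu : G.degree u = 1) : ∃ w, G.neighborFinset u = {w} ∧ G.Adj u w ∧ 2 ≤ G.degree w := by
  classical
  obtain ⟨w, hw⟩ := Finset.card_eq_one.mp
    (by rw [G.card_neighborFinset_eq_degree]; exact hu)
  have hadj : G.Adj u w := by
    have : w ∈ G.neighborFinset u := by rw [hw]; exact Finset.mem_singleton_self w
    exact (G.mem_neighborFinset u w).mp this
  refine ⟨w, hw, hadj, ?_⟩
  by_contra hcon
  push_neg at hcon
  have hdw : G.degree w = 1 := by
    have h1 : 1 ≤ G.degree w := conn_degree_pos hconn (by omega) w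
    omega
  obtain ⟨x, hx⟩ := Finset.card_eq_one.mp
    (by rw [G.card_neighborFinset_eq_degree]; exact hdw)
  have hxu : x = u := by
    have : u ∈ G.neighborFinset w := (G.mem_neighborFinset w u).mpr hadj.symm
    rw [hx] at this
    exact (Finset.mem_singleton.mp this).symm
  rw [hxu] at hx
  clear hxu
  have hcl : ∀ a ∈ ({u, w} : Set V), ∀ b, G.Adj a b → b ∈ ({u, w} : Set V) := by
    rintro a (rfl | rfl) b hab
    · have : b ∈ G.neighborFinset a := (G.mem_neighborFinset a b).mpr hab
      rw [hw] at this
      right; exact Finset.mem_singleton.mp this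
    · have : b ∈ G.neighborFinset a := (G.mem_neighborFinset a b).mpr hab
      rw [hx] at this
      left; exact Finset.mem_singleton.mp this
  have hall := closure_eq_univ hcl hconn (show u ∈ ({u, w} : Set V) from Or.inl rfl)
  have hsub : (univ : Finset V) ⊆ {u, w} := fun v _ => by
    rcases hall v with h | h
    · exact Finset.mem_insert.mpr (Or.inl h)
    · exact Finset.mem_insert.mpr (Or.inr (Finset.mem_singleton.mpr h))
  have : Fintype.card V ≤ 2 := by
    calc Fintype.card V = #(univ : Finset V) := (Finset.card_univ).symm
    _ ≤ #({u, w} : Finset V) := Finset.card_le_card hsub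
    _ ≤ 2 := Finset.card_insert_le _ _ |>.trans (by simp)
  omega

end Conn

section Cycle
variable {V : Type*} [Fintype V] {G : SimpleGraph V} [DecidableRel G.Adj]

lemma exists_other (hd : ∀ v : V, G.degree v = 2) {v u : V} (h : G.Adj v u) :
    ∃ w, G.Adj v w ∧ w ≠ u ∧ ∀ x, G.Adj v x → x = u ∨ x = w := by
  classical
  have h2 : #(G.neighborFinset v) = 2 := by
    rw [G.card_neighborFinset_eq_degree]; exact hd v
  obtain ⟨x, y, hxy, hset⟩ := Finset.card_eq_two.mp h2
  have hmem : ∀ z : V, G.Adj v z ↔ (z = x ∨ z = y) := by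
    intro z
    rw [← G.mem_neighborFinset, hset]
    simp
  rcases (hmem u).mp h with rfl | rfl
  · exact ⟨y, (hmem y).mpr (Or.inr rfl), fun hyx => hxy hyx.symm,
      fun z hz => (hmem z).mp hz⟩
  · refine ⟨x, (hmem x).mpr (Or.inl rfl), hxy, fun z hz => ?_⟩
    rcases (hmem z).mp hz with h1 | h1
    · exact Or.inr h1
    · exact Or.inl h1

noncomputable def other (hd : ∀ v : V, G.degree v = 2) (v u : V) : V :=
  letI := Classical.dec (G.Adj v u)
  if h : G.Adj v u then (exists_other hd h).choose else v

lemma other_adj (hd : ∀ v : V, G.degree v = 2) {v u : V} (h : G.Adj v u) :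
    G.Adj v (other hd v u) := by
  rw [other]; rw [dif_pos h]; exact (exists_other hd h).choose_spec.1

lemma other_ne (hd : ∀ v : V, G.degree v = 2) {v u : V} (h : G.Adj v u) :
    other hd v u ≠ u := by
  rw [other]; rw [dif_pos h]; exact (exists_other hd h).choose_spec.2.1

lemma other_eq_or (hd : ∀ v : V, G.degree v = 2) {v u x : V} (h : G.Adj v u)
    (hx : G.Adj v x) : x = u ∨ x = other hd v u := by
  rw [other]; rw [dif_pos h]; exact (exists_other hd h).choose_spec.2.2 x hx

lemma other_other (hd : ∀ v : V, G.degree v = 2) {v u : V} (h : G.Adj v u) :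
    other hd v (other hd v u) = u := by
  have h1 : G.Adj v (other hd v u) := other_adj hd h
  rcases other_eq_or hd h1 h with h2 | h2
  · exact absurd h2.symm (other_ne hd h)
  · exact h2.symm

lemma cycle_iso (hconn : G.Connected) (hd : ∀ v : V, G.degree v = 2)
    (h3 : 3 ≤ Fintype.card V) : Nonempty (G ≃g cycleGraph (Fintype.card V)) := by
  classical
  obtain ⟨v0⟩ := hconn.nonempty
  obtain ⟨u0, hu0⟩ := (G.degree_pos_iff_exists_adj v0).mp (by rw [hd v0]; norm_num)
  set step : V × V → V × V := fun q => (q.2, other hd q.2 q.1) with hstep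
  set f : ℕ → V × V := fun k => step^[k] (v0, u0) with hfdef
  have hf0 : f 0 = (v0, u0) := rfl
  have hfs : ∀ k, f (k+1) = step (f k) := fun k => Function.iterate_succ_apply' step k _
  have hadjf : ∀ k, G.Adj (f k).1 (f k).2 := by
    intro k
    induction k with
    | zero => exact hu0
    | succ k ih =>
      rw [hfs]
      exact other_adj hd ih.symm
  have hback1 : ∀ k, (f (k+1)).1 = (f k).2 := fun k => by rw [hfs]
  have hback2 : ∀ k, (f (k+1)).2 = other hd (f k).2 (f k).1 := fun k => by rw [hfs]
  have hpred : ∀ k, f k = (other hd (f (k+1)).1 (f (k+1)).2, (f (k+1)).1) := by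
    intro k
    have h1 := hback1 k
    have h2 := hback2 k
    refine Prod.ext ?_ ?_
    · rw [h1, h2]
      exact (other_other hd (hadjf k).symm).symm
    · rw [h1]
  have hcancel : ∀ t i j, f (i + t) = f (j + t) → f i = f j := by
    intro t
    induction t with
    | zero => intro i j h; simpa using h
    | succ t ih =>
      intro i j h
      apply ih
      have h1 : f ((i + t) + 1) = f ((j + t) + 1) := by
        rw [show (i+t)+1 = i + (t+1) by omega, show (j+t)+1 = j + (t+1) by omega]
        exact h
      rw [hpred (i+t), hpred (j+t), h1]
  have hP : ∃ t, 0 < t ∧ f t = f 0 := by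
    obtain ⟨i, j, hij, hfij⟩ := Finite.exists_ne_map_eq_of_infinite f
    rcases Nat.lt_or_ge i j with hlt | hge
    · refine ⟨j - i, by omega, ?_⟩
      have := hcancel i (j - i) 0 (by rw [show j - i + i = j by omega, zero_add]; exact hfij.symm)
      simpa using this
    · have hlt : j < i := by omega
      refine ⟨i - j, by omega, ?_⟩
      have := hcancel j (i - j) 0 (by rw [show i - j + j = i by omega, zero_add]; exact hfij)
      simpa using this
  set p := Nat.find hP with hpdef
  obtain ⟨hppos, hpeq⟩ : 0 < p ∧ f p = f 0 := Nat.find_spec hP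
  have hper : ∀ k, f (k + p) = f k := by
    intro k
    induction k with
    | zero => simpa using hpeq
    | succ k ih =>
      rw [show k + 1 + p = (k + p) + 1 by omega, hfs, ih, hfs]
  have hper' : ∀ k t, f (k + t * p) = f k := by
    intro k t
    induction t with
    | zero => simp
    | succ t ih =>
      rw [show k + (t+1)*p = (k + t*p) + p by ring, hper, ih]
  have hmod : ∀ k, f (k % p) = f k := by
    intro k
    have h := hper' (k % p) (k / p)
    rw [Nat.mod_add_div'] at h
    exact h.symm
  have hp2 : 2 ≤ p := by
    by_contra hcon
    push_neg at hcon
    have hp1 : p = 1 := by omega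
    have h1 : f 1 = f 0 := by rw [← hp1]; exact hpeq
    have h2 : (f 1).1 = v0 := by rw [h1, hf0]
    rw [hfs 0, hf0] at h2
    exact G.ne_of_adj hu0 (h2 : u0 = v0).symm
  haveI : NeZero p := ⟨by omega⟩
  set A : ZMod p → V := fun z => (f z.val).1 with hAdef
  set B : ZMod p → V := fun z => (f z.val).2 with hBdef
  have hvalsucc : ∀ z : ZMod p, f ((z+1).val) = f (z.val + 1) := by
    intro z
    rw [ZMod.val_add, ZMod.val_one_eq_one_mod]
    have h1 : (z.val + 1 % p) % p = (z.val + 1) % p := by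
      conv_rhs => rw [Nat.add_mod]
      rw [Nat.mod_eq_of_lt (ZMod.val_lt z)]
    rw [h1]
    exact hmod _
  have hAB : ∀ z : ZMod p, B z = A (z + 1) := by
    intro z
    show (f z.val).2 = (f ((z+1).val)).1
    rw [hvalsucc, hback1]
  have hAdjA : ∀ z : ZMod p, G.Adj (A z) (A (z+1)) := by
    intro z
    rw [← hAB]
    exact hadjf z.val
  have hstep2 : ∀ z : ZMod p, A (z+1+1) = other hd (A (z+1)) (A z) := by
    intro z
    rw [← hAB (z+1), ← hAB z]
    show (f ((z+1).val)).2 = other hd (f z.val).2 (f z.val).1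
    rw [hvalsucc, hback2]
  have hAdjA' : ∀ z : ZMod p, G.Adj (A z) (A (z-1)) := by
    intro z
    have := hAdjA (z-1)
    rw [sub_add_cancel] at this
    exact this.symm
  have hsucc_other : ∀ z : ZMod p, A (z+1) = other hd (A z) (A (z-1)) := by
    intro z
    have := hstep2 (z-1)
    rwa [sub_add_cancel] at this
  have hnbr : ∀ z x, G.Adj (A z) x → x = A (z - 1) ∨ x = A (z + 1) := by
    intro z x hx
    rcases other_eq_or hd (hAdjA' z) hx with h | h
    · exact Or.inl h
    · right; rw [hsucc_other z]; exact h
  have hne11 : ∀ z : ZMod p, A (z+1) ≠ A (z-1) := by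
    intro z
    rw [hsucc_other z]
    exact other_ne hd (hAdjA' z)
  have hconsne : ∀ z : ZMod p, A z ≠ A (z+1) := fun z => G.ne_of_adj (hAdjA z)
  -- injectivity
  have hvalcast : ∀ z : ZMod p, ((z.val : ℕ) : ZMod p) = z := fun z =>
    ZMod.natCast_rightInverse z
  have hAinj : Function.Injective A := by
    intro i j hAij
    by_contra hijne
    have hFij : f i.val ≠ f j.val := by
      intro heq
      have hvalne : i.val ≠ j.val := by
        intro h
        apply hijne
        rw [← hvalcast i, ← hvalcast j, h]
      have hiv : i.val < p := ZMod.val_lt i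
      have hjv : j.val < p := ZMod.val_lt j
      rcases Nat.lt_or_ge i.val j.val with hlt | hge
      · have := hcancel i.val (j.val - i.val) 0
          (by rw [show j.val - i.val + i.val = j.val by omega, zero_add]; exact heq.symm)
        exact Nat.find_min hP (show j.val - i.val < p by omega) ⟨by omega, by simpa using this⟩
      · have hlt : j.val < i.val := by omega
        have := hcancel j.val (i.val - j.val) 0
          (by rw [show i.val - j.val + j.val = i.val by omega, zero_add]; exact heq)
        exact Nat.find_min hP (show i.val - j.val < p by omega) ⟨by omega, by simpa using this⟩
    have hBij : B j = A (i - 1) := by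
      have hBadj : G.Adj (A i) (B j) := by
        rw [hAij]
        exact hadjf j.val
      rcases hnbr i (B j) hBadj with h | h
      · exact h
      · exfalso
        rw [← hAB] at h
        apply hFij
        refine Prod.ext ?_ ?_
        · exact hAij
        · exact h.symm
    have hrefl : ∀ k : ℕ, A (j + k) = A (i - k) ∧ A (j + k + 1) = A (i - k - 1) := by
      intro k
      induction k with
      | zero =>
        constructor
        · simpa using hAij.symm
        · have : A (j + 1) = A (i - 1) := by rw [← hAB j]; exact hBij
          simpa using this
      | succ k ih =>
        obtain ⟨P1, P2⟩ := ih
        have key : A (j + k + 1 + 1) = A (i - k - 1 - 1) := by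
          have hadj2 : G.Adj (A (i - k - 1)) (A (j + k + 1 + 1)) := by
            rw [← P2]
            exact hAdjA (j + k + 1)
          rcases hnbr (i - k - 1) _ hadj2 with h | h
          · exact h
          · exfalso
            have hik : A (j+k+1+1) = A (j + k) := by
              rw [h, show i - k - 1 + 1 = i - k by ring, ← P1]
            exact hne11 (j + k + 1) (by
              rw [show (j+k+1) + 1 = j+k+1+1 by ring, show (j+k+1) - 1 = j+k by ring]
              exact hik)
        constructor
        · push_cast
          push_cast at P2
          convert P2 using 2 <;> ring
        · push_cast
          push_cast at key
          convert key using 2 <;> ring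
    -- choose k to get contradiction
    rcases Nat.even_or_odd (i - j).val with he | ho
    · obtain ⟨t, ht⟩ := he
      have hk : (t : ZMod p) + t = i - j := by
        rw [← Nat.cast_add, ← ht, hvalcast]
      obtain ⟨P1, P2⟩ := hrefl t
      apply hne11 (j + (t : ZMod p))
      rw [show (j + (t:ZMod p)) + 1 = j + t + 1 from rfl]
      rw [show (j + (t:ZMod p)) - 1 = i - t - 1 by linear_combination hk]
      exact P2
    · obtain ⟨t, ht⟩ := ho
      have hk : (t : ZMod p) + t + 1 = i - j := by
        have : ((2 * t + 1 : ℕ) : ZMod p) = i - j := by rw [← ht, hvalcast]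
        push_cast at this
        linear_combination this
      obtain ⟨P1, P2⟩ := hrefl t
      apply hconsne (j + (t : ZMod p))
      rw [show (j + (t:ZMod p)) + 1 = i - t by linear_combination hk]
      exact P1
  -- surjectivity
  have hAsurj : Function.Surjective A := by
    have hcl : ∀ a ∈ Set.range A, ∀ b, G.Adj a b → b ∈ Set.range A := by
      rintro a ⟨z, rfl⟩ b hab
      rcases hnbr z b hab with h | h
      · exact ⟨z - 1, h.symm⟩
      · exact ⟨z + 1, h.symm⟩
    have h0 : v0 ∈ Set.range A := ⟨0, by show (f (0:ZMod p).val).1 = v0; rw [ZMod.val_zero, hf0]⟩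
    exact fun v => closure_eq_univ hcl hconn h0 v
  have hAbij : Function.Bijective A := ⟨hAinj, hAsurj⟩
  have hcardp : p = Fintype.card V := by
    rw [← ZMod.card p]
    exact Fintype.card_of_bijective hAbij
  have hp3 : 3 ≤ p := by omega
  -- adjacency characterization
  have hAdjIff : ∀ z w : ZMod p, G.Adj (A z) (A w) ↔ (w = z + 1 ∨ w = z - 1) := by
    intro z w
    constructor
    · intro h
      rcases hnbr z (A w) h with h1 | h1
      · exact Or.inr (hAinj h1)
      · exact Or.inl (hAinj h1)
    · rintro (rfl | rfl)
      · exact hAdjA z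
      · exact hAdjA' z
  -- build the iso
  rw [← hcardp]
  obtain ⟨m, hm⟩ : ∃ m, p = m + 1 + 2 := ⟨p - 3, by omega⟩
  rw [hm]
  have hmp : m + 1 + 2 = p := hm.symm
  set ι : Fin (m+1+2) → ZMod p := fun x => ((x : ℕ) : ZMod p) with hιdef
  have hιval : ∀ x : Fin (m+1+2), (ι x).val = (x : ℕ) := fun x =>
    ZMod.val_cast_of_lt (by rw [hm]; exact x.isLt)
  have hιinj : Function.Injective ι := fun x y hxy => by
    have h := congrArg ZMod.val hxy
    rw [hιval, hιval] at h
    exact Fin.ext h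
  have hιsurj : Function.Surjective ι := fun z => by
    refine ⟨⟨z.val, by rw [← hm]; exact ZMod.val_lt z⟩, ?_⟩
    show ((z.val : ℕ) : ZMod p) = z
    exact hvalcast z
  have hιadd1 : ∀ x : Fin (m+1+2), ι (x + 1) = ι x + 1 := by
    intro x
    show (((x + 1 : Fin (m+1+2)) : ℕ) : ZMod p) = ((x : ℕ) : ZMod p) + 1
    have h1 : ((x + 1 : Fin (m+1+2)) : ℕ) = ((x : ℕ) + 1) % (m+1+2) := by
      rw [Fin.val_add, Fin.val_one]
    rw [h1]
    rcases Nat.lt_or_ge ((x : ℕ) + 1) (m+1+2) with hlt | hge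
    · rw [Nat.mod_eq_of_lt hlt]; push_cast; ring
    · have hx1 : (x : ℕ) + 1 = m+1+2 := by have := x.isLt; omega
      rw [hx1, Nat.mod_self]
      have h4 : ((x : ℕ) : ZMod p) + 1 = (((x : ℕ) + 1 : ℕ) : ZMod p) := by push_cast; ring
      rw [h4, hx1, show ((m+1+2 : ℕ) : ZMod p) = 0 by rw [hmp]; exact ZMod.natCast_self p]
      simp
  have hadj_iff : ∀ x y : Fin (m+1+2), G.Adj (A (ι x)) (A (ι y)) ↔
      (cycleGraph (m+1+2)).Adj x y := by
    intro x y
    rw [cycleGraph_adj, hAdjIff]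
    constructor
    · rintro (h | h)
      · right
        have h2 : ι y = ι (x+1) := by rw [hιadd1]; exact h
        rw [hιinj h2]
        abel
      · left
        have h2 : ι (y + 1) = ι x := by rw [hιadd1, h]; ring
        rw [← hιinj h2]
        abel
    · rintro (h | h)
      · right
        have hx : x = 1 + y := sub_eq_iff_eq_add.mp h
        rw [hx, show (1 : Fin (m+1+2)) + y = y + 1 by abel, hιadd1]
        ring
      · left
        have hy : y = 1 + x := sub_eq_iff_eq_add.mp h
        rw [hy, show (1 : Fin (m+1+2)) + x = x + 1 by abel, hιadd1]
  refine ⟨SimpleGraph.Iso.symm ⟨Equiv.ofBijective (fun x => A (ι x))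
    ⟨hAinj.comp hιinj, hAsurj.comp hιsurj⟩, ?_⟩⟩
  intro x y
  exact hadj_iff x y

end Cycle

section Star
variable {V : Type*} [Fintype V] {G : SimpleGraph V} [DecidableRel G.Adj]

noncomputable def termf (G : SimpleGraph V) [DecidableRel G.Adj] : Sym2 V → ℝ :=
  Sym2.lift ⟨fun x y => term (G.degree x : ℝ) (G.degree y : ℝ),
    fun x y => by simp [term, add_comm, min_comm]⟩

lemma termf_mk (x y : V) : termf G s(x, y) = term (G.degree x : ℝ) (G.degree y : ℝ) := rfl

noncomputable def recipf (G : SimpleGraph V) [DecidableRel G.Adj] : Sym2 V → ℝ :=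
  Sym2.lift ⟨fun x y => 1/(G.degree x : ℝ) + 1/(G.degree y : ℝ), fun x y => by ring⟩

lemma recipf_mk (x y : V) : recipf G s(x, y) = 1/(G.degree x : ℝ) + 1/(G.degree y : ℝ) := rfl

lemma sum_recipf (hdeg : ∀ v : V, 0 < G.degree v) :
    ∑ e ∈ G.edgeFinset, recipf G e = (Fintype.card V : ℝ) :=
  sum_recip_degrees G hdeg

lemma HSO_spec (G : SimpleGraph V) [DecidableRel G.Adj] :
    HSO G = ∑ e ∈ G.edgeFinset, termf G e := by
  unfold HSO termf
  simp only [term]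
  congr!

lemma iso_degree {W : Type*} [Fintype W] {H : SimpleGraph W} [DecidableRel H.Adj]
    (f : G ≃g H) (v : V) : G.degree v = H.degree (f v) := by
  rw [← card_neighborSet_eq_degree, ← card_neighborSet_eq_degree]
  exact Fintype.card_congr (f.mapNeighborSet v)

lemma HSO_two_regular (hd : ∀ v : V, G.degree v = 2) :
    HSO G = Real.sqrt 2 * (Fintype.card V : ℝ) := by
  have hm : #G.edgeFinset = Fintype.card V := by
    have h1 := G.sum_degrees_eq_twice_card_edges
    rw [Finset.sum_congr rfl (fun v _ => hd v), Finset.sum_const, Finset.card_univ,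
      smul_eq_mul] at h1
    omega
  rw [HSO_spec]
  have hterm : ∀ e ∈ G.edgeFinset, termf G e = Real.sqrt 2 := by
    intro e he
    induction e with
    | _ x y =>
      rw [termf_mk, hd x, hd y]
      push_cast
      exact term_self (by norm_num)
  rw [Finset.sum_congr rfl hterm, Finset.sum_const, hm, nsmul_eq_mul]
  ring

lemma star_adj (v : V) (hadj : ∀ u, u ≠ v → G.Adj v u)
    (hleaf : ∀ u, u ≠ v → G.degree u = 1) :
    ∀ x y, G.Adj x y ↔ ((x = v ∧ y ≠ v) ∨ (y = v ∧ x ≠ v)) := by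
  intro x y
  constructor
  · intro h
    by_cases hx : x = v
    · exact Or.inl ⟨hx, fun hy => G.ne_of_adj h (hx.trans hy.symm)⟩
    · by_cases hy : y = v
      · exact Or.inr ⟨hy, hx⟩
      · exfalso
        obtain ⟨w, hw⟩ := Finset.card_eq_one.mp
          (by rw [G.card_neighborFinset_eq_degree]; exact hleaf x hx)
        have h1 : y ∈ G.neighborFinset x := (G.mem_neighborFinset x y).mpr h
        have h2 : v ∈ G.neighborFinset x := (G.mem_neighborFinset x v).mpr (hadj x hx).symm
        rw [hw] at h1 h2
        exact hy ((Finset.mem_singleton.mp h1).trans (Finset.mem_singleton.mp h2).symm)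
  · rintro (⟨rfl, hy⟩ | ⟨rfl, hx⟩)
    · exact hadj y hy
    · exact (hadj x hx).symm

lemma star_degree_center (v : V) (hadj : ∀ u, u ≠ v → G.Adj v u) :
    G.degree v = Fintype.card V - 1 := by
  classical
  have hNv : G.neighborFinset v = univ.erase v := by
    ext u
    rw [mem_neighborFinset, Finset.mem_erase]
    constructor
    · intro h
      exact ⟨(G.ne_of_adj h).symm, mem_univ u⟩
    · rintro ⟨hu, _⟩
      exact hadj u hu
  rw [← card_neighborFinset_eq_degree, hNv, Finset.card_erase_of_mem (mem_univ v),
    Finset.card_univ]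

lemma HSO_star_val (h3 : 3 ≤ Fintype.card V) (v : V)
    (hadj : ∀ u, u ≠ v → G.Adj v u) (hleaf : ∀ u, u ≠ v → G.degree u = 1) :
    HSO G = ((Fintype.card V : ℝ) - 1) *
      Real.sqrt (((Fintype.card V : ℝ) - 1)^2 + 1) := by
  classical
  set n := Fintype.card V with hn
  have hchar := star_adj v hadj hleaf
  have hdv : G.degree v = n - 1 := star_degree_center v hadj
  have hcast : ((n - 1 : ℕ) : ℝ) = (n : ℝ) - 1 := by
    rw [Nat.cast_sub (by omega)]; simp
  have hc1 : (1:ℝ) ≤ ((n - 1 : ℕ) : ℝ) := by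
    rw [hcast]
    have : (3:ℝ) ≤ (n:ℝ) := by exact_mod_cast h3
    linarith
  have hm : #G.edgeFinset = n - 1 := by
    have hsum : ∑ u : V, G.degree u = 2 * #G.edgeFinset := G.sum_degrees_eq_twice_card_edges
    have h2 : ∑ u : V, G.degree u = (n-1) + (n-1) := by
      rw [← Finset.add_sum_erase _ _ (mem_univ v), hdv]
      congr 1
      rw [Finset.sum_congr rfl (fun u hu => hleaf u (Finset.mem_erase.mp hu).1),
        Finset.sum_const, Finset.card_erase_of_mem (mem_univ v), Finset.card_univ, smul_eq_mul,
        mul_one]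
    omega
  rw [HSO_spec]
  have hterm : ∀ e ∈ G.edgeFinset, termf G e = Real.sqrt (((n:ℝ)-1)^2 + 1) := by
    intro e he
    induction e with
    | _ x y =>
      rw [termf_mk]
      have hxy : G.Adj x y := (G.mem_edgeSet).mp (mem_edgeFinset.mp he)
      rcases (hchar x y).mp hxy with ⟨rfl, hy⟩ | ⟨rfl, hx⟩
      · rw [hdv, hleaf y hy, term_comm, Nat.cast_one, term_one hc1, hcast]
        rw [add_comm]
      · rw [hdv, hleaf x hx, Nat.cast_one, term_one hc1, hcast]
        rw [add_comm]
  rw [Finset.sum_congr rfl hterm, Finset.sum_const, hm, nsmul_eq_mul, hcast]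

lemma star_iso (v : V) (hadj : ∀ u, u ≠ v → G.Adj v u)
    (hleaf : ∀ u, u ≠ v → G.degree u = 1) :
    Nonempty (G ≃g completeBipartiteGraph (Fin 1) (Fin (Fintype.card V - 1))) := by
  classical
  have hchar := star_adj v hadj hleaf
  have hcardc : Fintype.card {x : V // ¬ x = v} = Fintype.card V - 1 := by
    rw [Fintype.card_subtype_compl, Fintype.card_subtype_eq]
  let eL : {x : V // x = v} ≃ Fin 1 :=
    { toFun := fun _ => 0
      invFun := fun _ => ⟨v, rfl⟩
      left_inv := by rintro ⟨x, rfl⟩; rfl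
      right_inv := fun x => Subsingleton.elim _ _ }
  let eR : {x : V // ¬ x = v} ≃ Fin (Fintype.card V - 1) := Fintype.equivFinOfCardEq hcardc
  let E : V ≃ (Fin 1 ⊕ Fin (Fintype.card V - 1)) :=
    (Equiv.sumCompl (· = v)).symm.trans (Equiv.sumCongr eL eR)
  have key : ∀ x : V, ((E x).isLeft = true ↔ x = v) ∧ ((E x).isRight = true ↔ ¬ x = v) := by
    intro x
    rcases hs : (Equiv.sumCompl (· = v)).symm x with p | p
    · have hx : x = v := by
        have h2 := congrArg (Equiv.sumCompl (· = v)) hs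
        rw [Equiv.apply_symm_apply] at h2
        rw [h2]
        exact p.2
      have hEx : E x = Sum.inl (eL p) := by
        show (Equiv.sumCongr eL eR) ((Equiv.sumCompl (· = v)).symm x) = _
        rw [hs]
        rfl
      rw [hEx]
      simp [hx]
    · have hx : ¬ x = v := by
        have h2 := congrArg (Equiv.sumCompl (· = v)) hs
        rw [Equiv.apply_symm_apply] at h2
        rw [h2]
        exact p.2
      have hEx : E x = Sum.inr (eR p) := by
        show (Equiv.sumCongr eL eR) ((Equiv.sumCompl (· = v)).symm x) = _
        rw [hs]
        rfl
      rw [hEx]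
      simp [hx]
  refine ⟨⟨E, ?_⟩⟩
  intro a b
  show (completeBipartiteGraph (Fin 1) (Fin (Fintype.card V - 1))).Adj (E a) (E b) ↔ G.Adj a b
  rw [completeBipartiteGraph_adj, hchar a b]
  rw [(key a).1, (key a).2, (key b).1, (key b).2]
  tauto

lemma star_structure {k : ℕ} (f : G ≃g completeBipartiteGraph (Fin 1) (Fin k)) :
    ∃ v, (∀ u, u ≠ v → G.Adj v u) ∧ (∀ u, u ≠ v → G.degree u = 1) := by
  classical
  set v := f.symm (Sum.inl 0) with hv
  have hfv : f v = Sum.inl 0 := f.toEquiv.apply_symm_apply _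
  have hInr : ∀ u, u ≠ v → ∃ j, f u = Sum.inr j := by
    intro u hu
    rcases hs : f u with a | j
    · exfalso
      have ha : a = 0 := Subsingleton.elim _ _
      have h2 : f u = f v := by rw [hs, ha, hfv]
      exact hu (f.toEquiv.injective h2)
    · exact ⟨j, rfl⟩
  have hadjall : ∀ u, u ≠ v → G.Adj v u := by
    intro u hu
    obtain ⟨j, hj⟩ := hInr u hu
    have h2 : (completeBipartiteGraph (Fin 1) (Fin k)).Adj (f v) (f u) := by
      rw [hfv, hj]
      simp [completeBipartiteGraph_adj]
    exact f.map_adj_iff.mp h2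
  refine ⟨v, hadjall, ?_⟩
  intro u hu
  obtain ⟨j, hj⟩ := hInr u hu
  have hN : G.neighborFinset u = {v} := by
    ext w
    rw [mem_neighborFinset, Finset.mem_singleton]
    constructor
    · intro hw
      have h2 : (completeBipartiteGraph (Fin 1) (Fin k)).Adj (f u) (f w) :=
        f.map_adj_iff.mpr hw
      rw [hj] at h2
      rcases hs : f w with a | b
      · have ha : a = 0 := Subsingleton.elim _ _
        have h3 : f w = f v := by rw [hs, ha, hfv]
        exact f.toEquiv.injective h3
      · rw [hs] at h2
        simp [completeBipartiteGraph_adj] at h2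
    · rintro rfl
      exact (hadjall u hu).symm
  rw [← card_neighborFinset_eq_degree, hN, Finset.card_singleton]

end Star

theorem stmt9 {V : Type*} [Fintype V] (G : SimpleGraph V) [DecidableRel G.Adj]
    (n : ℕ) (hn : n = Fintype.card V) (hn3 : 3 ≤ n) (hconn : G.Connected) :
    Real.sqrt 2 * n ≤ HSO G ∧
    HSO G ≤ ((n : ℝ) - 1) * Real.sqrt (((n : ℝ) - 1) ^ 2 + 1) ∧
    (HSO G = Real.sqrt 2 * n ↔ Nonempty (G ≃g cycleGraph n)) ∧
    (HSO G = ((n : ℝ) - 1) * Real.sqrt (((n : ℝ) - 1) ^ 2 + 1) ↔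
      Nonempty (G ≃g completeBipartiteGraph (Fin 1) (Fin (n - 1)))) := by
  classical
  have hcardV : Fintype.card V = n := hn.symm
  have hcard3 : 3 ≤ Fintype.card V := by omega
  have hdegpos : ∀ v : V, 0 < G.degree v := fun v => conn_degree_pos hconn (by omega) v
  have hdeg1 : ∀ v : V, (1:ℝ) ≤ (G.degree v : ℝ) := fun v => by exact_mod_cast hdegpos v
  have hncast : ((n - 1 : ℕ) : ℝ) = (n : ℝ) - 1 := by
    rw [Nat.cast_sub (by omega)]; simp
  have hdegubN : ∀ v : V, G.degree v ≤ n - 1 := fun v => by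
    have := G.degree_lt_card_verts v
    omega
  have hdegub : ∀ v : V, (G.degree v : ℝ) ≤ (n:ℝ) - 1 := fun v => by
    rw [← hncast]
    exact_mod_cast hdegubN v
  set m := #G.edgeFinset with hmdef
  have hmlb : n - 1 ≤ m := by
    have := conn_card_edges hconn
    omega
  have hHSO : HSO G = ∑ e ∈ G.edgeFinset, termf G e := HSO_spec G
  -- generic per-edge facts
  have hadj_of_mem : ∀ {x y : V}, s(x,y) ∈ G.edgeFinset → G.Adj x y := fun
    h => (G.mem_edgeSet).mp (mem_edgeFinset.mp h)
  have hterm_lb : ∀ e ∈ G.edgeFinset, Real.sqrt 2 ≤ termf G e := by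
    intro e he
    induction e with
    | _ x y =>
      rw [termf_mk]
      exact term_lb (hdeg1 x) (hdeg1 y)
  have hlb_m : Real.sqrt 2 * m ≤ HSO G := by
    rw [hHSO]
    calc Real.sqrt 2 * m = ∑ _e ∈ G.edgeFinset, Real.sqrt 2 := by
          rw [Finset.sum_const, nsmul_eq_mul, ← hmdef]; ring
    _ ≤ ∑ e ∈ G.edgeFinset, termf G e := Finset.sum_le_sum hterm_lb
  -- tree case is strict
  have h2lt : Real.sqrt 2 < 1.415 := by
    rw [Real.sqrt_lt' (by norm_num)]; norm_num
  have h5gt : (2.2:ℝ) < Real.sqrt 5 := (Real.lt_sqrt (by norm_num)).mpr (by norm_num)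
  have htree : m = n - 1 → Real.sqrt 2 * n < HSO G := by
    intro hmt
    obtain ⟨u1, u2, hne, hd1, hd2⟩ := two_leaves hconn hcard3 (by rw [hcardV]; exact hmt)
    obtain ⟨w1, hw1set, hw1adj, hw1deg⟩ := leaf_nbr hconn hcard3 hd1
    obtain ⟨w2, hw2set, hw2adj, hw2deg⟩ := leaf_nbr hconn hcard3 hd2
    set e1 : Sym2 V := s(u1, w1) with he1def
    set e2 : Sym2 V := s(u2, w2) with he2def
    have he1 : e1 ∈ G.edgeFinset := mem_edgeFinset.mpr ((G.mem_edgeSet).mpr hw1adj)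
    have he2 : e2 ∈ G.edgeFinset := mem_edgeFinset.mpr ((G.mem_edgeSet).mpr hw2adj)
    have hne12 : e1 ≠ e2 := by
      intro h
      rcases Sym2.eq_iff.mp h with ⟨h1, h2⟩ | ⟨h1, h2⟩
      · exact hne h1
      · rw [← h1] at hw2deg
        omega
    have hsub : ({e1, e2} : Finset (Sym2 V)) ⊆ G.edgeFinset := by
      intro e he
      rcases Finset.mem_insert.mp he with rfl | he'
      · exact he1
      · rw [Finset.mem_singleton.mp he']
        exact he2
    have hsplit : ∑ e ∈ G.edgeFinset \ {e1, e2}, termf G e + ∑ e ∈ ({e1, e2} : Finset (Sym2 V)), termf G e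
        = ∑ e ∈ G.edgeFinset, termf G e := Finset.sum_sdiff hsub
    have hpair : ∑ e ∈ ({e1, e2} : Finset (Sym2 V)), termf G e ≥ 2 * Real.sqrt 5 := by
      rw [Finset.sum_pair hne12]
      have hv1 : Real.sqrt 5 ≤ termf G e1 := by
        rw [he1def, termf_mk, hd1, Nat.cast_one]
        exact term_lb5 (by exact_mod_cast hw1deg)
      have hv2 : Real.sqrt 5 ≤ termf G e2 := by
        rw [he2def, termf_mk, hd2, Nat.cast_one]
        exact term_lb5 (by exact_mod_cast hw2deg)
      linarith
    have hcards : #(G.edgeFinset \ {e1, e2}) = m - 2 := by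
      rw [Finset.card_sdiff_of_subset hsub, Finset.card_pair hne12]
    have hrest : ∑ e ∈ G.edgeFinset \ {e1, e2}, termf G e ≥ Real.sqrt 2 * (m - 2 : ℕ) := by
      calc ∑ e ∈ G.edgeFinset \ {e1, e2}, termf G e
          ≥ ∑ _e ∈ G.edgeFinset \ {e1, e2}, Real.sqrt 2 :=
            Finset.sum_le_sum (fun e he => hterm_lb e (Finset.mem_sdiff.mp he).1)
      _ = Real.sqrt 2 * (m - 2 : ℕ) := by
            rw [Finset.sum_const, hcards, nsmul_eq_mul]; ring
    have hm2cast : ((m - 2 : ℕ) : ℝ) = (n:ℝ) - 3 := by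
      have h1 : m - 2 = n - 3 := by omega
      rw [h1, Nat.cast_sub (by omega)]
      norm_num
    have hcastn : (3:ℝ) ≤ (n:ℝ) := by exact_mod_cast hn3
    rw [hHSO, ← hsplit]
    have h20 : (0:ℝ) ≤ Real.sqrt 2 := Real.sqrt_nonneg 2
    nlinarith [hrest, hpair, hm2cast, h2lt, h5gt, hcastn]
  -- global lower bound
  have hlow : Real.sqrt 2 * n ≤ HSO G := by
    rcases Nat.lt_or_ge m n with hlt | hge
    · have hmt : m = n - 1 := by omega
      exact le_of_lt (htree hmt)
    · calc Real.sqrt 2 * n ≤ Real.sqrt 2 * m := by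
            have : (n:ℝ) ≤ (m:ℝ) := by exact_mod_cast hge
            nlinarith [Real.sqrt_nonneg 2]
      _ ≤ HSO G := hlb_m
  -- upper bound
  set c : ℝ := (n:ℝ) - 1 with hcdef
  set K : ℝ := c * Real.sqrt (1 + c^2) / (c + 1) with hKdef
  have hc2 : (2:ℝ) ≤ c := by
    have : (3:ℝ) ≤ (n:ℝ) := by exact_mod_cast hn3
    rw [hcdef]; linarith
  have hterm_ub : ∀ e ∈ G.edgeFinset, termf G e ≤ K * recipf G e := by
    intro e he
    induction e with
    | _ x y =>
      rw [termf_mk, recipf_mk]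
      rcases le_total (G.degree x : ℝ) (G.degree y : ℝ) with hle | hle
      · exact term_ub (hdeg1 x) hle (hdegub y)
      · calc term (G.degree x : ℝ) (G.degree y : ℝ)
            = term (G.degree y : ℝ) (G.degree x : ℝ) := term_comm _ _
        _ ≤ K * (1/(G.degree y : ℝ) + 1/(G.degree x : ℝ)) := term_ub (hdeg1 y) hle (hdegub x)
        _ = K * (1/(G.degree x : ℝ) + 1/(G.degree y : ℝ)) := by ring
  have hub_sum : HSO G ≤ K * n := by
    rw [hHSO]
    calc ∑ e ∈ G.edgeFinset, termf G e ≤ ∑ e ∈ G.edgeFinset, K * recipf G e :=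
          Finset.sum_le_sum hterm_ub
    _ = K * ∑ e ∈ G.edgeFinset, recipf G e := by rw [Finset.mul_sum]
    _ = K * n := by rw [sum_recipf hdegpos, hcardV]
  have hn0 : (n:ℝ) ≠ 0 := by positivity
  have hc1n : c + 1 = (n:ℝ) := by rw [hcdef]; ring
  have hKn : K * n = c * Real.sqrt (c^2 + 1) := by
    rw [hKdef, show (1 + c^2) = c^2 + 1 by ring, hc1n, div_mul_cancel₀ _ hn0]
  have hub : HSO G ≤ ((n : ℝ) - 1) * Real.sqrt (((n : ℝ) - 1) ^ 2 + 1) := by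
    rw [← hcdef]
    calc HSO G ≤ K * n := hub_sum
    _ = c * Real.sqrt (c^2+1) := hKn
  refine ⟨hlow, hub, ?_, ?_⟩
  · -- cycle iff
    constructor
    · intro heq
      have hm_n : m = n := by
        rcases Nat.lt_or_ge m n with hlt | hge
        · exfalso
          have hmt : m = n - 1 := by omega
          have := htree hmt
          rw [heq] at this
          exact lt_irrefl _ this
        · by_contra hne'
          have hgt : n < m := by omega
          have h1 : Real.sqrt 2 * m ≤ Real.sqrt 2 * n := by rw [← heq]; exact hlb_m
          have h2 : (n:ℝ) < (m:ℝ) := by exact_mod_cast hgt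
          have h3 : (0:ℝ) < Real.sqrt 2 := Real.sqrt_pos.mpr (by norm_num)
          nlinarith
      have hsum_eq : ∑ _e ∈ G.edgeFinset, Real.sqrt 2 = ∑ e ∈ G.edgeFinset, termf G e := by
        rw [Finset.sum_const, nsmul_eq_mul, ← hmdef, ← hHSO, heq, hm_n]
        ring
      have hall := (Finset.sum_eq_sum_iff_of_le hterm_lb).mp hsum_eq
      have hreg : ∀ ⦃x y : V⦄, G.Adj x y → G.degree x = G.degree y := by
        intro x y hxy
        have he : s(x,y) ∈ G.edgeFinset := mem_edgeFinset.mpr ((G.mem_edgeSet).mpr hxy)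
        have h1 := hall _ he
        rw [termf_mk] at h1
        have h2 := term_lb_eq (hdeg1 x) (hdeg1 y) h1.symm
        exact_mod_cast h2
      obtain ⟨v0⟩ := hconn.nonempty
      have hk : ∀ v : V, G.degree v = G.degree v0 := fun v => conn_const_degree hconn hreg v v0
      have hsumdeg : ∑ v : V, G.degree v = 2 * m := G.sum_degrees_eq_twice_card_edges
      have hsumdeg2 : Fintype.card V * G.degree v0 = 2 * m := by
        rw [← hsumdeg, Finset.sum_congr rfl (fun v _ => hk v), Finset.sum_const,
          Finset.card_univ, smul_eq_mul]
      have hd2 : ∀ v : V, G.degree v = 2 := by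
        intro v
        rw [hk v]
        have h1 : n * G.degree v0 = 2 * n := by
          have h2 := hsumdeg2
          rw [hcardV, hm_n] at h2
          exact h2
        have hnpos : 0 < n := by omega
        exact Nat.eq_of_mul_eq_mul_left hnpos (h1.trans (Nat.mul_comm 2 n))
      rw [hn]
      exact cycle_iso hconn hd2 hcard3
    · rintro ⟨f⟩
      obtain ⟨m', hm'⟩ : ∃ m', n = m' + 3 := ⟨n - 3, by omega⟩
      have hd2 : ∀ v : V, G.degree v = 2 := by
        intro v
        rw [iso_degree f v]
        have : ∀ w : Fin n, (cycleGraph n).degree w = 2 := by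
          rw [hm']
          intro w
          exact cycleGraph_degree_three_le
        exact this (f v)
      rw [HSO_two_regular hd2, hcardV]
  · -- star iff
    constructor
    · intro heq
      have hsum_eq : ∑ e ∈ G.edgeFinset, termf G e = ∑ e ∈ G.edgeFinset, K * recipf G e := by
        rw [← hHSO, heq, ← Finset.mul_sum, sum_recipf hdegpos, hcardV, hKn]
      have hall := (Finset.sum_eq_sum_iff_of_le hterm_ub).mp hsum_eq
      have hpattern : ∀ ⦃x y : V⦄, G.Adj x y →
          (G.degree x = 1 ∧ G.degree y = n - 1) ∨ (G.degree y = 1 ∧ G.degree x = n - 1) := by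
        intro x y hxy
        have he : s(x,y) ∈ G.edgeFinset := mem_edgeFinset.mpr ((G.mem_edgeSet).mpr hxy)
        have h1 := hall _ he
        rw [termf_mk, recipf_mk] at h1
        rcases le_total (G.degree x : ℝ) (G.degree y : ℝ) with hle | hle
        · obtain ⟨ha, hb⟩ := term_ub_eq (hdeg1 x) hle (hdegub y) h1
          left
          constructor
          · exact_mod_cast ha
          · have : (G.degree y : ℝ) = ((n-1:ℕ):ℝ) := by rw [hncast]; exact hb
            exact_mod_cast this
        · have h1' : term (G.degree y : ℝ) (G.degree x : ℝ)
              = K * (1/(G.degree y : ℝ) + 1/(G.degree x : ℝ)) := by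
            rw [term_comm]
            rw [h1]
            ring
          obtain ⟨ha, hb⟩ := term_ub_eq (hdeg1 y) hle (hdegub x) h1'
          right
          constructor
          · exact_mod_cast ha
          · have : (G.degree x : ℝ) = ((n-1:ℕ):ℝ) := by rw [hncast]; exact hb
            exact_mod_cast this
      -- find a center
      have hmpos : 0 < m := by omega
      obtain ⟨e0, he0⟩ := Finset.card_pos.mp hmpos
      obtain ⟨v, hdv⟩ : ∃ v : V, G.degree v = n - 1 := by
        induction e0 with
        | _ x y =>
          have hxy := hadj_of_mem he0
          rcases hpattern hxy with ⟨_, hb⟩ | ⟨_, hb⟩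
          · exact ⟨y, hb⟩
          · exact ⟨x, hb⟩
      have hadjall : ∀ u, u ≠ v → G.Adj v u := by
        have hNv : G.neighborFinset v = univ.erase v := by
          apply Finset.eq_of_subset_of_card_le
          · intro u hu
            rw [Finset.mem_erase]
            exact ⟨(G.ne_of_adj ((G.mem_neighborFinset v u).mp hu)).symm, mem_univ u⟩
          · rw [Finset.card_erase_of_mem (mem_univ v), Finset.card_univ, hcardV,
              G.card_neighborFinset_eq_degree, hdv]
        intro u hu
        rw [← G.mem_neighborFinset, hNv, Finset.mem_erase]
        exact ⟨hu, mem_univ u⟩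
      have hleaf : ∀ u, u ≠ v → G.degree u = 1 := by
        intro u hu
        have hadj := hadjall u hu
        rcases hpattern hadj with ⟨ha, _⟩ | ⟨ha, _⟩
        · omega
        · exact ha
      rw [hn]
      exact star_iso v hadjall hleaf
    · rintro ⟨f⟩
      obtain ⟨v, hadjall, hleaf⟩ := star_structure f
      rw [HSO_star_val hcard3 v hadjall hleaf, hcardV]
end

section
/- If G is a connected graph with m ≥ 1 edges and maximum degree Δ, then cDSO(G) ≥ m·√(Δ² + 1)/Δ, with equality if and only if G is the star S_{m+1}. -/
open SimpleGraph Finset Real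

/-! For an edge whose end degrees are `a ≤ b ≤ Δ` with `a ≥ 1`, the summand of `cDSO` is
`√(a² + b²) / b = √(1 + (a / b)²)`, and `a / b ≥ 1 / b ≥ 1 / Δ`; so every edge contributes at
least `√(Δ² + 1) / Δ`, with equality exactly when it joins a leaf to a vertex of maximum degree.
If all edges are of this kind, the neighbours of a vertex `v` of maximum degree are leaves, and
connectivity forces every other vertex to be one of them: `G` is the star centred at `v`. -/

noncomputable def cdsoWeight (a b : ℝ) : ℝ := √(a ^ 2 + b ^ 2) / max a b

section Weight

variable {a b D : ℝ}

lemma sqrt_mul_eq_sqrt_mul_sq {x y : ℝ} (hy : 0 ≤ y) : √x * y = √(x * y ^ 2) := by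
  rw [Real.sqrt_mul' _ (sq_nonneg y), Real.sqrt_sq hy]

lemma sqrt_sq_add_one_div_le_sqrt_sq_add_sq_div (ha : 1 ≤ a) (hab : a ≤ b) (hbD : b ≤ D) :
    √(D ^ 2 + 1) / D ≤ √(a ^ 2 + b ^ 2) / b := by
  have hb : 0 < b := by linarith
  rw [div_le_div_iff₀ (hb.trans_le hbD) hb, sqrt_mul_eq_sqrt_mul_sq hb.le,
    sqrt_mul_eq_sqrt_mul_sq (hb.trans_le hbD).le]
  have hbaD : b ≤ a * D := by nlinarith
  exact Real.sqrt_le_sqrt (by nlinarith)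

lemma sqrt_sq_add_sq_div_eq_iff (ha : 1 ≤ a) (hab : a ≤ b) (hbD : b ≤ D) :
    √(a ^ 2 + b ^ 2) / b = √(D ^ 2 + 1) / D ↔ a = 1 ∧ b = D := by
  have hb : 0 < b := by linarith
  refine ⟨fun h => ?_, fun ⟨ha, hb⟩ => by rw [ha, hb, one_pow, add_comm]⟩
  rw [div_eq_div_iff hb.ne' (hb.trans_le hbD).ne', sqrt_mul_eq_sqrt_mul_sq (hb.trans_le hbD).le,
    sqrt_mul_eq_sqrt_mul_sq hb.le, Real.sqrt_inj (by positivity) (by positivity)] at h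
  have haD : a * D = b := by nlinarith
  constructor <;> nlinarith

lemma cdsoWeight_comm (a b : ℝ) : cdsoWeight a b = cdsoWeight b a := by
  rw [cdsoWeight, cdsoWeight, add_comm, max_comm]

lemma cdsoWeight_of_le (h : a ≤ b) : cdsoWeight a b = √(a ^ 2 + b ^ 2) / b := by
  rw [cdsoWeight, max_eq_right h]

lemma sqrt_sq_add_one_div_le_cdsoWeight (ha : 1 ≤ a) (hb : 1 ≤ b) (haD : a ≤ D) (hbD : b ≤ D) :
    √(D ^ 2 + 1) / D ≤ cdsoWeight a b := by
  wlog hab : a ≤ b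
  · rw [cdsoWeight_comm]
    exact this hb ha hbD haD (le_of_not_ge hab)
  rw [cdsoWeight_of_le hab]
  exact sqrt_sq_add_one_div_le_sqrt_sq_add_sq_div ha hab hbD

lemma cdsoWeight_eq_iff (ha : 1 ≤ a) (hb : 1 ≤ b) (haD : a ≤ D) (hbD : b ≤ D) :
    cdsoWeight a b = √(D ^ 2 + 1) / D ↔ min a b = 1 ∧ max a b = D := by
  wlog hab : a ≤ b
  · rw [cdsoWeight_comm, min_comm, max_comm]
    exact this hb ha hbD haD (le_of_not_ge hab)
  rw [cdsoWeight_of_le hab, min_eq_left hab, max_eq_right hab]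
  exact sqrt_sq_add_sq_div_eq_iff ha hab hbD

end Weight

namespace SimpleGraph

section Star

variable {V W : Type*}

def starGraphCongr (e : V ≃ W) {r : V} {s : W} (h : e r = s) : starGraph r ≃g starGraph s where
  toEquiv := e
  map_rel_iff' := by simp [← h, e.injective.eq_iff]

lemma completeBipartiteGraph_fin_one_eq_starGraph :
    completeBipartiteGraph (Fin 1) W = starGraph (Sum.inl 0) := by
  ext (a | a) (b | b) <;> simp [Fin.fin_one_eq_zero]

lemma eq_starGraph_of_iso {G : SimpleGraph V} {s : W} (φ : G ≃g starGraph s) :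
    G = starGraph (φ.symm s) := by
  ext x y
  rw [← φ.map_adj_iff, starGraph_adj, starGraph_adj, φ.injective.ne_iff, φ.eq_symm_apply,
    φ.eq_symm_apply]

variable [Fintype V]

lemma card_edgeFinset_starGraph (r : V) [Fintype (starGraph r).edgeSet] :
    #(starGraph r).edgeFinset + 1 = Fintype.card V := by
  classical
  have hinc : (starGraph r).edgeFinset = (starGraph r).incidenceFinset r := by
    ext e
    induction e using Sym2.ind with
    | _ x y => simp [incidenceSet, eq_comm]
  rw [hinc, card_incidenceFinset_eq_degree, degree_starGraph_center]
  have : 0 < Fintype.card V := Fintype.card_pos_iff.mpr ⟨r⟩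
  omega

end Star

variable {V : Type*} [Fintype V] (G : SimpleGraph V) [DecidableRel G.Adj]

def EdgesJoinLeafAndMaxDegree : Prop :=
  ∀ ⦃x y : V⦄, G.Adj x y →
    min (G.degree x) (G.degree y) = 1 ∧ max (G.degree x) (G.degree y) = G.maxDegree

lemma cDSO_eq_sum_cdsoWeight :
    cDSO G = ∑ e ∈ G.edgeFinset, Sym2.lift
      ⟨fun x y => cdsoWeight (G.degree x) (G.degree y), fun _ _ => cdsoWeight_comm _ _⟩ e := by
  unfold cDSO
  congr! 4
  simp only [cdsoWeight]
  congr!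

variable {G}

lemma one_le_degree_le_maxDegree_of_adj {x y : V} (h : G.Adj x y) :
    (1 : ℝ) ≤ G.degree x ∧ (1 : ℝ) ≤ G.degree y ∧
      (G.degree x : ℝ) ≤ G.maxDegree ∧ (G.degree y : ℝ) ≤ G.maxDegree := by
  have hx : 0 < G.degree x := G.degree_pos_iff_exists_adj x |>.mpr ⟨y, h⟩
  have hy : 0 < G.degree y := G.degree_pos_iff_exists_adj y |>.mpr ⟨x, h.symm⟩
  exact ⟨mod_cast hx, mod_cast hy, mod_cast G.degree_le_maxDegree x,
    mod_cast G.degree_le_maxDegree y⟩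

lemma sqrt_maxDegree_div_le_cdsoWeight {x y : V} (h : G.Adj x y) :
    √((G.maxDegree : ℝ) ^ 2 + 1) / G.maxDegree ≤ cdsoWeight (G.degree x) (G.degree y) := by
  obtain ⟨hx, hy, hxΔ, hyΔ⟩ := one_le_degree_le_maxDegree_of_adj h
  exact sqrt_sq_add_one_div_le_cdsoWeight hx hy hxΔ hyΔ

lemma cdsoWeight_eq_iff_of_adj {x y : V} (h : G.Adj x y) :
    cdsoWeight (G.degree x) (G.degree y) = √((G.maxDegree : ℝ) ^ 2 + 1) / G.maxDegree ↔
      min (G.degree x) (G.degree y) = 1 ∧ max (G.degree x) (G.degree y) = G.maxDegree := by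
  obtain ⟨hx, hy, hxΔ, hyΔ⟩ := one_le_degree_le_maxDegree_of_adj h
  rw [cdsoWeight_eq_iff hx hy hxΔ hyΔ, ← Nat.cast_min, ← Nat.cast_max]
  norm_cast

lemma card_edgeFinset_mul_div_eq_sum (s : ℝ) :
    (#G.edgeFinset : ℝ) * s / G.maxDegree = ∑ _e ∈ G.edgeFinset, s / G.maxDegree := by
  rw [sum_const, nsmul_eq_mul, mul_div_assoc]

theorem card_edgeFinset_mul_sqrt_div_le_cDSO :
    (#G.edgeFinset : ℝ) * √((G.maxDegree : ℝ) ^ 2 + 1) / G.maxDegree ≤ cDSO G := by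
  rw [card_edgeFinset_mul_div_eq_sum, cDSO_eq_sum_cdsoWeight]
  refine sum_le_sum fun e he => ?_
  induction e using Sym2.ind with
  | _ x y => exact sqrt_maxDegree_div_le_cdsoWeight (G.mem_edgeFinset.mp he)

theorem cDSO_eq_iff_edgesJoinLeafAndMaxDegree :
    cDSO G = (#G.edgeFinset : ℝ) * √((G.maxDegree : ℝ) ^ 2 + 1) / G.maxDegree ↔
      G.EdgesJoinLeafAndMaxDegree := by
  rw [card_edgeFinset_mul_div_eq_sum, cDSO_eq_sum_cdsoWeight, eq_comm,
    sum_eq_sum_iff_of_le fun e he => ?_]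
  · refine ⟨fun h x y hxy => ?_, fun h e he => ?_⟩
    · exact (cdsoWeight_eq_iff_of_adj hxy).mp (h s(x, y) (G.mem_edgeFinset.mpr hxy)).symm
    · induction e using Sym2.ind with
      | _ x y =>
        have hxy := G.mem_edgeFinset.mp he
        exact ((cdsoWeight_eq_iff_of_adj hxy).mpr (h hxy)).symm
  · induction e using Sym2.ind with
    | _ x y => exact sqrt_maxDegree_div_le_cdsoWeight (G.mem_edgeFinset.mp he)

lemma edgesJoinLeafAndMaxDegree_starGraph (r : V) [DecidableRel (starGraph r).Adj] :
    (starGraph r).EdgesJoinLeafAndMaxDegree := by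
  classical
  have hleaf : ∀ w, w ≠ r → (starGraph r).degree w = 1 := fun w hw => by
    have := degree_starGraph_of_ne_center hw
    convert this
  have hcenter : (starGraph r).degree r = Fintype.card V - 1 := by
    have := degree_starGraph_center (r := r)
    convert this
  have hcard : ∀ x y : V, x ≠ y → 2 ≤ Fintype.card V := fun x y h =>
    Fintype.one_lt_card_iff_nontrivial.mpr (nontrivial_of_ne x y h)
  have : Nonempty V := ⟨r⟩
  have hmax : (starGraph r).maxDegree = Fintype.card V - 1 :=
    le_antisymm (Nat.le_sub_one_of_lt (maxDegree_lt_card_verts _))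
      (hcenter ▸ degree_le_maxDegree _ r)
  intro x y hxy
  obtain ⟨hne, rfl | rfl⟩ := starGraph_adj.mp hxy
  · rw [hcenter, hleaf y hne.symm, hmax]
    have := hcard _ _ hne
    omega
  · rw [hcenter, hleaf x hne, hmax]
    have := hcard _ _ hne
    omega

lemma eq_starGraph_of_connected_of_forall_adj_degree_eq_one (hconn : G.Connected) {v : V}
    (hleaf : ∀ w, G.Adj v w → G.degree w = 1) : G = starGraph v := by
  have hunique : ∀ w, G.Adj v w → ∀ u, G.Adj w u → u = v := fun w hw u hu =>
    (degree_eq_one_iff_existsUnique_adj.mp (hleaf w hw)).unique hu hw.symm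
  have huniv : G.IsUniversal v := by
    intro w hvw
    by_contra hw
    obtain ⟨d, -, hfst, hsnd⟩ := (hconn.preconnected v w).some.exists_boundary_dart
      {u | u = v ∨ G.Adj v u} (Or.inl rfl) (by simp [hvw.symm, hw])
    simp only [Set.mem_ofPred_eq, not_or] at hfst hsnd
    rcases hfst with hfst | hfst
    · exact hsnd.2 (hfst ▸ d.adj)
    · exact hsnd.1 (hunique _ hfst _ d.adj)
  ext x y
  refine ⟨fun h => ⟨h.ne, ?_⟩, ?_⟩
  · by_cases hx : x = v
    · exact Or.inl hx
    · exact Or.inr (hunique x (huniv (Ne.symm hx)) y h)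
  · rintro ⟨hne, rfl | rfl⟩
    · exact huniv hne
    · exact (huniv hne.symm).symm

lemma exists_eq_starGraph (hconn : G.Connected) (h : G.EdgesJoinLeafAndMaxDegree) :
    ∃ v, G = starGraph v := by
  have := hconn.nonempty
  obtain ⟨v, hv⟩ := G.exists_maximal_degree_vertex
  refine ⟨v, eq_starGraph_of_connected_of_forall_adj_degree_eq_one hconn fun w hvw => ?_⟩
  -- `min (deg v) (deg w) = 1` with `deg w ≤ Δ = deg v` forces `deg w = 1`.
  have hw := G.degree_le_maxDegree w
  have := (h hvw).1
  omega

lemma nonempty_iso_completeBipartiteGraph_iff :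
    Nonempty (G ≃g completeBipartiteGraph (Fin 1) (Fin #G.edgeFinset)) ↔ ∃ r, G = starGraph r := by
  rw [completeBipartiteGraph_fin_one_eq_starGraph]
  refine ⟨fun ⟨φ⟩ => ⟨_, eq_starGraph_of_iso φ⟩, ?_⟩
  rintro ⟨r, rfl⟩
  have hcard : Fintype.card V = Fintype.card (Fin 1 ⊕ Fin #(starGraph r).edgeFinset) := by
    rw [Fintype.card_sum, Fintype.card_fin, Fintype.card_fin, add_comm, card_edgeFinset_starGraph]
  let e := (Fintype.equivOfCardEq hcard).trans
    (Equiv.swap (Fintype.equivOfCardEq hcard r) (.inl 0))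
  exact ⟨starGraphCongr e (Equiv.swap_apply_left _ _)⟩

end SimpleGraph

theorem stmt12_general {V : Type*} [Fintype V] (G : SimpleGraph V) [DecidableRel G.Adj]
    (hconn : G.Connected) (m : ℕ) (hm : m = G.edgeFinset.card) :
    (m : ℝ) * Real.sqrt ((G.maxDegree : ℝ) ^ 2 + 1) / G.maxDegree ≤ cDSO G ∧
    (cDSO G = (m : ℝ) * Real.sqrt ((G.maxDegree : ℝ) ^ 2 + 1) / G.maxDegree ↔
      Nonempty (G ≃g completeBipartiteGraph (Fin 1) (Fin m))) := by
  subst hm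
  refine ⟨card_edgeFinset_mul_sqrt_div_le_cDSO, ?_⟩
  rw [cDSO_eq_iff_edgesJoinLeafAndMaxDegree, nonempty_iso_completeBipartiteGraph_iff]
  refine ⟨exists_eq_starGraph hconn, ?_⟩
  rintro ⟨r, rfl⟩
  exact edgesJoinLeafAndMaxDegree_starGraph r

theorem stmt12 {V : Type*} [Fintype V] (G : SimpleGraph V) [DecidableRel G.Adj]
    (hconn : G.Connected) (m : ℕ) (hm : m = G.edgeFinset.card) (hm1 : 1 ≤ m) :
    (m : ℝ) * Real.sqrt ((G.maxDegree : ℝ) ^ 2 + 1) / G.maxDegree ≤ cDSO G ∧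
    (cDSO G = (m : ℝ) * Real.sqrt ((G.maxDegree : ℝ) ^ 2 + 1) / G.maxDegree ↔
      Nonempty (G ≃g completeBipartiteGraph (Fin 1) (Fin m))) :=
  stmt12_general G hconn m hm
end

section
/- Let G be a connected graph of order at least 2 with minimum degree δ and maximum degree Δ. Then (1/Δ)·SO(G) ≤ cDSO(G) ≤ (1/δ)·SO(G). The right equality holds if and only if G is regular; the left equality holds if and only if every edge of G is incident to at least one vertex of degree Δ. -/
open SimpleGraph Finset Real

theorem stmt14 {V : Type*} [Fintype V] (G : SimpleGraph V) [DecidableRel G.Adj]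
    (hconn : G.Connected) (hn : 2 ≤ Fintype.card V) :
    ((1 : ℝ) / G.maxDegree) * SO G ≤ cDSO G ∧
    cDSO G ≤ ((1 : ℝ) / G.minDegree) * SO G ∧
    (cDSO G = ((1 : ℝ) / G.minDegree) * SO G ↔ IsRegularGraph G) ∧
    (((1 : ℝ) / G.maxDegree) * SO G = cDSO G ↔
      ∀ u v, G.Adj u v → G.degree u = G.maxDegree ∨ G.degree v = G.maxDegree) := by
  have hNe : Nonempty V := Fintype.card_pos_iff.mp (by omega)
  have hNt : Nontrivial V := Fintype.one_lt_card_iff_nontrivial.mp hn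
  have hdeg : ∀ v : V, 0 < G.degree v := by
    intro v
    rw [G.degree_pos_iff_exists_adj]
    obtain ⟨w, hw⟩ := exists_ne v
    obtain ⟨p⟩ := hconn v w
    cases p with
    | nil => exact absurd rfl hw
    | cons h _ => exact ⟨_, h⟩
  obtain ⟨v₀⟩ := hNe
  have hΔ : 0 < G.maxDegree := lt_of_lt_of_le (hdeg v₀) (G.degree_le_maxDegree v₀)
  have hδ : 0 < G.minDegree := by
    obtain ⟨v, hv⟩ := G.exists_minimal_degree_vertex
    rw [hv]; exact hdeg v
  have hΔR : (0:ℝ) < G.maxDegree := by exact_mod_cast hΔ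
  have hδR : (0:ℝ) < G.minDegree := by exact_mod_cast hδ
  -- bridge instance mismatch
  have hSO : SO G = ∑ e ∈ G.edgeFinset, Sym2.lift
      ⟨fun x y => Real.sqrt ((G.degree x : ℝ) ^ 2 + (G.degree y : ℝ) ^ 2),
       fun x y => by simp [add_comm]⟩ e := by
    simp only [SO]; congr!
  have hcDSO : cDSO G = ∑ e ∈ G.edgeFinset, Sym2.lift
      ⟨fun x y => Real.sqrt ((G.degree x : ℝ) ^ 2 + (G.degree y : ℝ) ^ 2) /
        max (G.degree x : ℝ) (G.degree y : ℝ),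
       fun x y => by simp [add_comm, max_comm]⟩ e := by
    simp only [cDSO]; congr!
  have hReg : IsRegularGraph G ↔ ∃ k, ∀ v, G.degree v = k := by
    unfold IsRegularGraph
    constructor
    · rintro ⟨k, hk⟩; exact ⟨k, fun v => by rw [← hk v]; congr!⟩
    · rintro ⟨k, hk⟩; exact ⟨k, fun v => by rw [← hk v]; congr!⟩
  -- pointwise facts
  have hsq : ∀ x y : V, G.Adj x y →
      0 < Real.sqrt ((G.degree x : ℝ) ^ 2 + (G.degree y : ℝ) ^ 2) := by
    intro x y _
    apply Real.sqrt_pos.mpr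
    have h1 : (0:ℝ) < (G.degree x : ℝ) := by exact_mod_cast hdeg x
    positivity
  have hmaxpos : ∀ x y : V, (0:ℝ) < max (G.degree x : ℝ) (G.degree y : ℝ) := by
    intro x y
    exact lt_max_of_lt_left (by exact_mod_cast hdeg x)
  have hmaxle : ∀ x y : V, max (G.degree x : ℝ) (G.degree y : ℝ) ≤ (G.maxDegree : ℝ) := by
    intro x y
    exact max_le (by exact_mod_cast G.degree_le_maxDegree x)
      (by exact_mod_cast G.degree_le_maxDegree y)
  have hminle : ∀ x y : V, (G.minDegree : ℝ) ≤ max (G.degree x : ℝ) (G.degree y : ℝ) := by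
    intro x y
    exact le_max_of_le_left (by exact_mod_cast G.minDegree_le_degree x)
  have termEq : ∀ x y : V, G.Adj x y → ∀ c : ℝ, 0 < c →
      (Real.sqrt ((G.degree x : ℝ) ^ 2 + (G.degree y : ℝ) ^ 2) /
        max (G.degree x : ℝ) (G.degree y : ℝ) =
       Real.sqrt ((G.degree x : ℝ) ^ 2 + (G.degree y : ℝ) ^ 2) / c ↔
       max (G.degree x : ℝ) (G.degree y : ℝ) = c) := by
    intro x y hadj c hc
    rw [div_eq_div_iff (hmaxpos x y).ne' hc.ne']
    constructor
    · intro h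
      exact (mul_left_cancel₀ (ne_of_gt (hsq x y hadj)) h).symm
    · intro h; rw [h]
  rw [hSO, hcDSO, one_div, one_div, inv_mul_eq_div, inv_mul_eq_div,
    Finset.sum_div, Finset.sum_div]
  -- pointwise inequalities on edges
  have key1 : ∀ e ∈ G.edgeFinset,
      Sym2.lift ⟨fun x y => Real.sqrt ((G.degree x : ℝ) ^ 2 + (G.degree y : ℝ) ^ 2),
        fun x y => by simp [add_comm]⟩ e / (G.maxDegree : ℝ) ≤
      Sym2.lift ⟨fun x y => Real.sqrt ((G.degree x : ℝ) ^ 2 + (G.degree y : ℝ) ^ 2) /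
        max (G.degree x : ℝ) (G.degree y : ℝ),
        fun x y => by simp [add_comm, max_comm]⟩ e := by
    intro e he
    induction e with
    | h x y =>
      simp only [Sym2.lift_mk]
      exact div_le_div_of_nonneg_left (Real.sqrt_nonneg _) (hmaxpos x y) (hmaxle x y)
  have key2 : ∀ e ∈ G.edgeFinset,
      Sym2.lift ⟨fun x y => Real.sqrt ((G.degree x : ℝ) ^ 2 + (G.degree y : ℝ) ^ 2) /
        max (G.degree x : ℝ) (G.degree y : ℝ),
        fun x y => by simp [add_comm, max_comm]⟩ e ≤
      Sym2.lift ⟨fun x y => Real.sqrt ((G.degree x : ℝ) ^ 2 + (G.degree y : ℝ) ^ 2),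
        fun x y => by simp [add_comm]⟩ e / (G.minDegree : ℝ) := by
    intro e he
    induction e with
    | h x y =>
      simp only [Sym2.lift_mk]
      exact div_le_div_of_nonneg_left (Real.sqrt_nonneg _) hδR (hminle x y)
  refine ⟨Finset.sum_le_sum key1, Finset.sum_le_sum key2, ?_, ?_⟩
  · rw [Finset.sum_eq_sum_iff_of_le key2, hReg]
    constructor
    · intro h
      refine ⟨G.minDegree, fun v => ?_⟩
      have hp := hdeg v
      rw [G.degree_pos_iff_exists_adj] at hp
      obtain ⟨w, hw⟩ := hp
      have he : s(v, w) ∈ G.edgeFinset := by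
        rw [SimpleGraph.mem_edgeFinset, SimpleGraph.mem_edgeSet]; exact hw
      have := h _ he
      simp only [Sym2.lift_mk] at this
      have hm : max (G.degree v : ℝ) (G.degree w : ℝ) = (G.minDegree : ℝ) :=
        (termEq v w hw _ hδR).mp this
      have h1 : (G.degree v : ℝ) ≤ (G.minDegree : ℝ) :=
        hm ▸ le_max_left _ _
      have h2 : (G.minDegree : ℝ) ≤ (G.degree v : ℝ) := by
        exact_mod_cast G.minDegree_le_degree v
      exact_mod_cast le_antisymm h1 h2
    · rintro ⟨k, hk⟩
      have hδk : G.minDegree = k := by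
        obtain ⟨v, hv⟩ := G.exists_minimal_degree_vertex
        rw [hv, hk]
      intro e he
      induction e with
      | h x y =>
        simp only [Sym2.lift_mk]
        rw [hk x, hk y, hδk, max_self]
  · rw [Finset.sum_eq_sum_iff_of_le key1]
    constructor
    · intro h u v hadj
      have he : s(u, v) ∈ G.edgeFinset := by
        rw [SimpleGraph.mem_edgeFinset, SimpleGraph.mem_edgeSet]; exact hadj
      have := (h _ he).symm
      simp only [Sym2.lift_mk] at this
      have hm : max (G.degree u : ℝ) (G.degree v : ℝ) = (G.maxDegree : ℝ) :=
        (termEq u v hadj _ hΔR).mp this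
      rcases max_cases (G.degree u : ℝ) (G.degree v : ℝ) with ⟨h', _⟩ | ⟨h', _⟩
      · left; exact_mod_cast h' ▸ hm
      · right; exact_mod_cast h' ▸ hm
    · intro h e he
      induction e with
      | h x y =>
        simp only [Sym2.lift_mk]
        have hadj : G.Adj x y := by
          rw [SimpleGraph.mem_edgeFinset, SimpleGraph.mem_edgeSet] at he; exact he
        symm
        rw [termEq x y hadj _ hΔR]
        rcases h x y hadj with h' | h'
        · exact le_antisymm (hmaxle x y) (h' ▸ le_max_left _ _)
        · exact le_antisymm (hmaxle x y) (h' ▸ le_max_right _ _)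
end

section
/- If G is a connected graph of order at least 2 with maximum degree Δ, then cDSO(G) ≥ M₁(G)/(√2·Δ), with equality if and only if G is regular. -/
open SimpleGraph Finset Real

lemma key_le' {a b D : ℝ} (ha : 0 < a) (hb : 0 < b) (haD : a ≤ D) (hbD : b ≤ D) :
    (a + b) / (Real.sqrt 2 * D) ≤ Real.sqrt (a^2 + b^2) / max a b := by
  have hD : 0 < D := lt_of_lt_of_le ha haD
  have hm : 0 < max a b := lt_max_of_lt_left ha
  have hab : a + b ≤ Real.sqrt 2 * Real.sqrt (a^2+b^2) := by
    rw [← Real.sqrt_mul (by norm_num)]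
    calc a + b = Real.sqrt ((a+b)^2) := (Real.sqrt_sq (by positivity)).symm
    _ ≤ _ := Real.sqrt_le_sqrt (by nlinarith [sq_nonneg (a-b)])
  rw [div_le_div_iff₀ (by positivity) hm]
  calc (a+b) * max a b ≤ (Real.sqrt 2 * Real.sqrt (a^2+b^2)) * D :=
        mul_le_mul hab (max_le haD hbD) hm.le (by positivity)
  _ = Real.sqrt (a^2+b^2) * (Real.sqrt 2 * D) := by ring

lemma key_lt' {a b D : ℝ} (ha : 0 < a) (hb : 0 < b) (haD : a ≤ D) (hbD : b ≤ D)
    (h : ¬(a = D ∧ b = D)) :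
    (a + b) / (Real.sqrt 2 * D) < Real.sqrt (a^2 + b^2) / max a b := by
  have hD : 0 < D := lt_of_lt_of_le ha haD
  have hm : 0 < max a b := lt_max_of_lt_left ha
  have hs : (0:ℝ) < Real.sqrt (a^2+b^2) := Real.sqrt_pos.mpr (by positivity)
  have hab : a + b ≤ Real.sqrt 2 * Real.sqrt (a^2+b^2) := by
    rw [← Real.sqrt_mul (by norm_num)]
    calc a + b = Real.sqrt ((a+b)^2) := (Real.sqrt_sq (by positivity)).symm
    _ ≤ _ := Real.sqrt_le_sqrt (by nlinarith [sq_nonneg (a-b)])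
  rw [div_lt_div_iff₀ (by positivity) hm]
  rcases eq_or_ne a b with hab' | hab'
  · have haD' : a < D := by
      rcases lt_or_eq_of_le haD with h' | h'
      · exact h'
      · exact absurd ⟨h', hab' ▸ h'⟩ h
    have hmD : max a b < D := max_lt haD' (hab' ▸ haD')
    calc (a+b) * max a b ≤ (Real.sqrt 2 * Real.sqrt (a^2+b^2)) * max a b :=
          mul_le_mul_of_nonneg_right hab hm.le
    _ < (Real.sqrt 2 * Real.sqrt (a^2+b^2)) * D := by
          apply mul_lt_mul_of_pos_left hmD (by positivity)
    _ = Real.sqrt (a^2+b^2) * (Real.sqrt 2 * D) := by ring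
  · have hab2 : a + b < Real.sqrt 2 * Real.sqrt (a^2+b^2) := by
      rw [← Real.sqrt_mul (by norm_num)]
      calc a + b = Real.sqrt ((a+b)^2) := (Real.sqrt_sq (by positivity)).symm
      _ < _ := by
            apply Real.sqrt_lt_sqrt (by positivity)
            have h0 : a - b ≠ 0 := sub_ne_zero.mpr hab'
            have : (0:ℝ) < (a-b)^2 := by positivity
            nlinarith
    calc (a+b) * max a b < (Real.sqrt 2 * Real.sqrt (a^2+b^2)) * max a b :=
          mul_lt_mul_of_pos_right hab2 hm
    _ ≤ (Real.sqrt 2 * Real.sqrt (a^2+b^2)) * D :=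
          mul_le_mul_of_nonneg_left (max_le haD hbD) (by positivity)
    _ = Real.sqrt (a^2+b^2) * (Real.sqrt 2 * D) := by ring

lemma key_eq' {a b D : ℝ} (ha : 0 < a) (hb : 0 < b) (haD : a ≤ D) (hbD : b ≤ D) :
    Real.sqrt (a^2 + b^2) / max a b = (a + b) / (Real.sqrt 2 * D) ↔ a = D ∧ b = D := by
  constructor
  · intro heq
    by_contra h
    exact absurd heq.symm (ne_of_lt (key_lt' ha hb haD hbD h))
  · rintro ⟨hA, hB⟩
    have hD : 0 < D := lt_of_lt_of_le ha haD
    rw [hA, hB]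
    rw [max_self]
    rw [show D^2 + D^2 = 2 * D^2 by ring, Real.sqrt_mul (by norm_num), Real.sqrt_sq hD.le]
    rw [mul_div_assoc, div_self (ne_of_gt hD)]
    have h2 : Real.sqrt 2 * Real.sqrt 2 = 2 := Real.mul_self_sqrt (by norm_num)
    rw [mul_one, eq_div_iff (by positivity)]
    nlinarith

theorem stmt15 {V : Type*} [Fintype V] (G : SimpleGraph V) [DecidableRel G.Adj]
    (hconn : G.Connected) (hn : 2 ≤ Fintype.card V) :
    M1 G / (Real.sqrt 2 * G.maxDegree) ≤ cDSO G ∧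
    (cDSO G = M1 G / (Real.sqrt 2 * G.maxDegree) ↔ IsRegularGraph G) := by
  have hcD : cDSO G = ∑ e ∈ G.edgeFinset, Sym2.lift
      ⟨fun x y => Real.sqrt ((G.degree x : ℝ) ^ 2 + (G.degree y : ℝ) ^ 2) /
        max (G.degree x : ℝ) (G.degree y : ℝ),
       fun x y => by simp [add_comm, max_comm]⟩ e := by
    unfold cDSO; congr!
  have hM1 : M1 G = ∑ e ∈ G.edgeFinset, Sym2.lift
      ⟨fun x y => (G.degree x : ℝ) + (G.degree y : ℝ),
       fun x y => by simp [add_comm]⟩ e := by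
    unfold M1; congr!
  have hreg : IsRegularGraph G ↔ ∃ k, G.IsRegularOfDegree k := by
    unfold IsRegularGraph; congr!
  rw [hcD, hM1, hreg]
  have hV : Nonempty V := Fintype.card_pos_iff.mp (by omega)
  have hadj : ∀ v : V, ∃ w, G.Adj v w := by
    intro v
    obtain ⟨u, hu⟩ := Fintype.exists_ne_of_one_lt_card (by omega) v
    obtain ⟨p⟩ := hconn.preconnected v u
    cases p with
    | nil => exact absurd rfl hu
    | cons h _ => exact ⟨_, h⟩
  have hdegpos : ∀ v : V, 0 < G.degree v := fun v => (G.degree_pos_iff_exists_adj v).mpr (hadj v)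
  have hDpos : 0 < G.maxDegree := lt_of_lt_of_le (hdegpos hV.some) (G.degree_le_maxDegree _)
  have hDposR : (0:ℝ) < (G.maxDegree : ℝ) := by exact_mod_cast hDpos
  rw [Finset.sum_div]
  have hle : ∀ e ∈ G.edgeFinset,
      Sym2.lift ⟨fun x y => (G.degree x : ℝ) + (G.degree y : ℝ),
        fun x y => by simp [add_comm]⟩ e / (Real.sqrt 2 * (G.maxDegree : ℝ)) ≤
      Sym2.lift ⟨fun x y => Real.sqrt ((G.degree x : ℝ) ^ 2 + (G.degree y : ℝ) ^ 2) /
        max (G.degree x : ℝ) (G.degree y : ℝ),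
        fun x y => by simp [add_comm, max_comm]⟩ e := by
    intro e he
    revert he
    refine Sym2.ind ?_ e
    intro u v he
    rw [mem_edgeFinset, mem_edgeSet] at he
    simp only [Sym2.lift_mk]
    exact key_le' (by exact_mod_cast hdegpos u) (by exact_mod_cast hdegpos v)
      (by exact_mod_cast G.degree_le_maxDegree u) (by exact_mod_cast G.degree_le_maxDegree v)
  constructor
  · exact Finset.sum_le_sum hle
  · rw [eq_comm, Finset.sum_eq_sum_iff_of_le hle]
    constructor
    · intro h
      refine ⟨G.maxDegree, fun v => ?_⟩
      obtain ⟨w, hw⟩ := hadj v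
      have he : s(v, w) ∈ G.edgeFinset := by rw [mem_edgeFinset, mem_edgeSet]; exact hw
      have heq := h _ he
      simp only [Sym2.lift_mk] at heq
      have hkey := (key_eq' (by exact_mod_cast hdegpos v) (by exact_mod_cast hdegpos w)
        (by exact_mod_cast G.degree_le_maxDegree v)
        (by exact_mod_cast G.degree_le_maxDegree w)).mp heq.symm
      exact_mod_cast hkey.1
    · rintro ⟨k, hk⟩
      have hDk : G.maxDegree = k :=
        le_antisymm (G.maxDegree_le_of_forall_degree_le k (fun v => le_of_eq (hk v)))
          (hk hV.some ▸ G.degree_le_maxDegree hV.some)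
      intro e he
      revert he
      refine Sym2.ind ?_ e
      intro u v he
      rw [mem_edgeFinset, mem_edgeSet] at he
      simp only [Sym2.lift_mk]
      have hku : (G.degree u : ℝ) = (G.maxDegree : ℝ) := by rw [hk u, hDk]
      have hkv : (G.degree v : ℝ) = (G.maxDegree : ℝ) := by rw [hk v, hDk]
      exact ((key_eq' (by exact_mod_cast hdegpos u) (by exact_mod_cast hdegpos v)
        (by exact_mod_cast G.degree_le_maxDegree u)
        (by exact_mod_cast G.degree_le_maxDegree v)).mpr ⟨hku, hkv⟩).symm
end

section
/- Let u and v be non-adjacent vertices of a graph G such that d(u) = d(u′) = 4·d(v) = 4·d(v′) ≥ 12 for all neighbors u′ of u and all neighbors v′ of v. Then cDSO(G + uv) < cDSO(G). -/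
open SimpleGraph Finset Real

-- auxiliary
noncomputable def eF {V : Type*} (d : V → ℝ) : Sym2 V → ℝ :=
  Sym2.lift ⟨fun x y => Real.sqrt (d x ^ 2 + d y ^ 2) / max (d x) (d y),
    fun x y => by simp [add_comm, max_comm]⟩

lemma eF_mk {V : Type*} (d : V → ℝ) (x y : V) :
    eF d s(x, y) = Real.sqrt (d x ^ 2 + d y ^ 2) / max (d x) (d y) := rfl

lemma degree_eq_natCard {V : Type*} (G : SimpleGraph V) (x : V)
    (i : Fintype (G.neighborSet x)) :
    @SimpleGraph.degree V G x i = Nat.card (G.neighborSet x) := by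
  rw [@Nat.card_eq_fintype_card _ i]
  exact (@SimpleGraph.card_neighborSet_eq_degree V G x i).symm

lemma edgeFinset_congr {V : Type*} (G : SimpleGraph V) (i1 i2 : Fintype G.edgeSet) :
    @SimpleGraph.edgeFinset V G i1 = @SimpleGraph.edgeFinset V G i2 := by
  ext e; simp [SimpleGraph.mem_edgeFinset]

lemma cDSO_eq {V : Type*} [Fintype V] (G : SimpleGraph V)
    [iE : Fintype G.edgeSet] [iN : ∀ x : V, Fintype (G.neighborSet x)] :
    cDSO G = ∑ e ∈ G.edgeFinset, eF (fun x => (G.degree x : ℝ)) e := by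
  unfold cDSO
  rw [edgeFinset_congr G _ iE]
  refine Finset.sum_congr rfl fun e _ => ?_
  induction e using Sym2.ind with
  | _ x y => simp only [Sym2.lift_mk, eF, degree_eq_natCard]

lemma key (k : ℝ) (hk : 3 ≤ k) :
    Real.sqrt ((4*k+1)^2 + (k+1)^2) / (4*k+1)
      + 4*k * (Real.sqrt ((4*k+1)^2 + (4*k)^2) / (4*k+1) - Real.sqrt 2)
      + k * (Real.sqrt ((k+1)^2 + k^2) / (k+1) - Real.sqrt 2) < 0 := by
  have hk0 : (0:ℝ) < k := by linarith
  have h1 : (0:ℝ) < 4*k+1 := by linarith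
  have h2 : (0:ℝ) < k+1 := by linarith
  have t2 : Real.sqrt 2 ^ 2 = 2 := Real.sq_sqrt (by norm_num)
  have tlb : (1.414:ℝ) ≤ Real.sqrt 2 := by
    nlinarith [Real.sqrt_nonneg 2, t2]
  set s1 := Real.sqrt ((4*k+1)^2 + (k+1)^2) with hs1
  set s2 := Real.sqrt ((4*k+1)^2 + (4*k)^2) with hs2
  set s3 := Real.sqrt ((k+1)^2 + k^2) with hs3
  have b1 : s1 ≤ 413/100*k + 13/10 := by
    rw [hs1, show (413/100*k + 13/10 : ℝ) = Real.sqrt ((413/100*k + 13/10)^2) from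
      (Real.sqrt_sq (by linarith)).symm]
    apply Real.sqrt_le_sqrt; nlinarith
  have b2 : s2 ≤ Real.sqrt 2 * (4*k + 51/100) := by
    rw [hs2, show Real.sqrt 2 * (4*k + 51/100) = Real.sqrt (2 * (4*k + 51/100)^2) by
      rw [Real.sqrt_mul (by norm_num), Real.sqrt_sq (by linarith)]]
    apply Real.sqrt_le_sqrt; nlinarith
  have b3 : s3 ≤ Real.sqrt 2 * (k + 3/5) := by
    rw [hs3, show Real.sqrt 2 * (k + 3/5) = Real.sqrt (2 * (k + 3/5)^2) by
      rw [Real.sqrt_mul (by norm_num), Real.sqrt_sq (by linarith)]]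
    apply Real.sqrt_le_sqrt; nlinarith
  have key2 : s1/(4*k+1) + 4*k*(s2/(4*k+1) - Real.sqrt 2) + k*(s3/(k+1) - Real.sqrt 2)
      = ((k+1)*s1 + 4*k*(k+1)*s2 + k*(4*k+1)*s3 - 5*k*(4*k+1)*(k+1)*Real.sqrt 2)
        / ((4*k+1)*(k+1)) := by
    field_simp; ring
  rw [key2]
  apply div_neg_of_neg_of_pos _ (by positivity)
  nlinarith [mul_pos hk0 h2, mul_pos hk0 h1, sq_nonneg k,
    mul_le_mul_of_nonneg_left b2 (by positivity : (0:ℝ) ≤ 4*k*(k+1)),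
    mul_le_mul_of_nonneg_left b3 (by positivity : (0:ℝ) ≤ k*(4*k+1)),
    mul_le_mul_of_nonneg_left b1 (le_of_lt h2)]

theorem stmt16 {V : Type*} [Fintype V] (G : SimpleGraph V) [DecidableRel G.Adj]
    (u v : V) (huv : u ≠ v) (hnadj : ¬ G.Adj u v)
    (h12 : 12 ≤ G.degree u) (huv4 : G.degree u = 4 * G.degree v)
    (hNu : ∀ w, G.Adj u w → G.degree w = G.degree u)
    (hNv : ∀ w, G.Adj v w → G.degree w = G.degree v) :
    cDSO (addEdge G u v) < cDSO G := by
  classical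
  set G' := addEdge G u v with hG'
  have hadj' : ∀ x y, G'.Adj x y ↔ G.Adj x y ∨ (x = u ∧ y = v) ∨ (x = v ∧ y = u) := by
    intro x y
    simp only [hG', addEdge, SimpleGraph.sup_adj, SimpleGraph.fromEdgeSet_adj,
      Set.mem_singleton_iff, Sym2.eq_iff]
    constructor
    · rintro (h | ⟨h, -⟩); exacts [Or.inl h, Or.inr h]
    · rintro (h | h | h)
      · exact Or.inl h
      · exact Or.inr ⟨Or.inl h, by rintro rfl; exact huv (h.1.symm.trans h.2)⟩
      · exact Or.inr ⟨Or.inr h, by rintro rfl; exact huv (h.2.symm.trans h.1)⟩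
  -- neighbor finsets
  have hnbu : G'.neighborFinset u = insert v (G.neighborFinset u) := by
    ext w
    rw [SimpleGraph.mem_neighborFinset, hadj', Finset.mem_insert, SimpleGraph.mem_neighborFinset]
    constructor
    · rintro (h | ⟨-, rfl⟩ | ⟨h, -⟩)
      · exact Or.inr h
      · exact Or.inl rfl
      · exact absurd h huv
    · rintro (rfl | h)
      · exact Or.inr (Or.inl ⟨rfl, rfl⟩)
      · exact Or.inl h
  have hnbv : G'.neighborFinset v = insert u (G.neighborFinset v) := by
    ext w
    rw [SimpleGraph.mem_neighborFinset, hadj', Finset.mem_insert, SimpleGraph.mem_neighborFinset]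
    constructor
    · rintro (h | ⟨h, -⟩ | ⟨-, rfl⟩)
      · exact Or.inr h
      · exact absurd h huv.symm
      · exact Or.inl rfl
    · rintro (rfl | h)
      · exact Or.inr (Or.inr ⟨rfl, rfl⟩)
      · exact Or.inl h
  have hnbw : ∀ w, w ≠ u → w ≠ v → G'.neighborFinset w = G.neighborFinset w := by
    intro w hwu hwv
    ext x
    rw [SimpleGraph.mem_neighborFinset, hadj', SimpleGraph.mem_neighborFinset]
    constructor
    · rintro (h | ⟨h, -⟩ | ⟨h, -⟩)
      · exact h
      · exact absurd h hwu
      · exact absurd h hwv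
    · exact fun h => Or.inl h
  have hdu' : G'.degree u = G.degree u + 1 := by
    rw [← SimpleGraph.card_neighborFinset_eq_degree, hnbu,
      Finset.card_insert_of_notMem (by simp [SimpleGraph.mem_neighborFinset, hnadj]),
      SimpleGraph.card_neighborFinset_eq_degree]
  have hdv' : G'.degree v = G.degree v + 1 := by
    rw [← SimpleGraph.card_neighborFinset_eq_degree, hnbv,
      Finset.card_insert_of_notMem (by
        rw [SimpleGraph.mem_neighborFinset]; exact fun h => hnadj h.symm),
      SimpleGraph.card_neighborFinset_eq_degree]
  have hdw' : ∀ w, w ≠ u → w ≠ v → G'.degree w = G.degree w := by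
    intro w hwu hwv
    rw [← SimpleGraph.card_neighborFinset_eq_degree, hnbw w hwu hwv,
      SimpleGraph.card_neighborFinset_eq_degree]
  -- edge finsets
  have hsuv : s(u, v) ∉ G.edgeFinset := by
    rw [SimpleGraph.mem_edgeFinset, SimpleGraph.mem_edgeSet]; exact hnadj
  have hE' : G'.edgeFinset = insert s(u, v) G.edgeFinset := by
    ext e
    induction e using Sym2.ind with
    | _ x y =>
      simp only [SimpleGraph.mem_edgeFinset, SimpleGraph.mem_edgeSet, Finset.mem_insert,
        hadj', Sym2.eq_iff]
      tauto
  -- real-valued degree facts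
  set n : ℝ := (G.degree v : ℝ) with hn
  have hn3 : 3 ≤ n := by
    rw [hn]; exact_mod_cast (by omega : 3 ≤ G.degree v)
  have hdun : (G.degree u : ℝ) = 4 * n := by rw [hn, huv4]; push_cast; ring
  have hn0 : (0:ℝ) < n := by linarith
  have sqrt2 : ∀ m : ℝ, 0 < m → Real.sqrt (m ^ 2 + m ^ 2) / max m m = Real.sqrt 2 := by
    intro m hm
    rw [max_self, show m ^ 2 + m ^ 2 = 2 * m ^ 2 by ring, Real.sqrt_mul (by norm_num),
      Real.sqrt_sq hm.le, mul_div_assoc, div_self hm.ne', mul_one]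
  -- rewrite cDSO
  rw [← sub_neg, cDSO_eq G', cDSO_eq G]
  set d : V → ℝ := fun x => ((G.degree x : ℝ)) with hd
  set d' : V → ℝ := fun x => ((G'.degree x : ℝ)) with hd'
  have hd'u : d' u = 4 * n + 1 := by
    show ((G'.degree u : ℝ)) = _
    rw [hdu']; push_cast; rw [hdun]
  have hd'v : d' v = n + 1 := by
    show ((G'.degree v : ℝ)) = _
    rw [hdv']; push_cast; rw [hn]
  have hd'w : ∀ w, w ≠ u → w ≠ v → d' w = d w := by
    intro w hwu hwv
    show ((G'.degree w : ℝ)) = ((G.degree w : ℝ))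
    rw [hdw' w hwu hwv]
  rw [hE', Finset.sum_insert hsuv, add_sub_assoc, ← Finset.sum_sub_distrib]
  set g : Sym2 V → ℝ := fun e => eF d' e - eF d e with hg
  rw [← Finset.sum_filter_add_sum_filter_not G.edgeFinset (fun e => u ∈ e) g,
    ← Finset.sum_filter_add_sum_filter_not
      (G.edgeFinset.filter (fun e => ¬ u ∈ e)) (fun e => v ∈ e) g]
  have hA : G.edgeFinset.filter (fun e => u ∈ e) = G.incidenceFinset u := by
    rw [SimpleGraph.incidenceFinset_eq_filter]
  have hB : (G.edgeFinset.filter (fun e => ¬ u ∈ e)).filter (fun e => v ∈ e)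
      = G.incidenceFinset v := by
    rw [SimpleGraph.incidenceFinset_eq_filter, Finset.filter_filter]
    ext e
    simp only [Finset.mem_filter]
    constructor
    · rintro ⟨he, -, hv⟩; exact ⟨he, hv⟩
    · rintro ⟨he, hv⟩
      refine ⟨he, fun hu => ?_, hv⟩
      exact hsuv (((Sym2.mem_and_mem_iff huv).mp ⟨hu, hv⟩) ▸ he)
  have hsumA : ∑ e ∈ G.edgeFinset.filter (fun e => u ∈ e), g e
      = 4*n * (Real.sqrt ((4*n+1)^2 + (4*n)^2) / (4*n+1) - Real.sqrt 2) := by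
    rw [hA]
    have hc : ∀ e ∈ G.incidenceFinset u,
        g e = Real.sqrt ((4*n+1)^2 + (4*n)^2) / (4*n+1) - Real.sqrt 2 := by
      intro e he
      rw [SimpleGraph.mem_incidenceFinset] at he
      obtain ⟨he, hu⟩ := he
      obtain ⟨w, rfl⟩ := Sym2.mem_iff_exists.mp hu
      rw [SimpleGraph.mem_edgeSet] at he
      have hwu : w ≠ u := fun h => G.ne_of_adj he (h ▸ rfl) |>.elim
      have hwv : w ≠ v := fun h => hnadj (h ▸ he)
      have hdw : d w = 4 * n := by
        show ((G.degree w : ℝ)) = _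
        rw [hNu w he, hdun]
      rw [hg]
      show eF d' s(u, w) - eF d s(u, w) = _
      rw [eF_mk, eF_mk, hd'u, hd'w w hwu hwv, hdw]
      have hdu4 : d u = 4 * n := by show ((G.degree u : ℝ)) = _; rw [hdun]
      rw [hdu4, max_eq_left (by linarith : (4*n:ℝ) ≤ 4*n+1), sqrt2 (4*n) (by linarith)]
    rw [Finset.sum_congr rfl hc, Finset.sum_const,
      SimpleGraph.card_incidenceFinset_eq_degree, nsmul_eq_mul, hdun]
  have hsumB : ∑ e ∈ (G.edgeFinset.filter (fun e => ¬ u ∈ e)).filter (fun e => v ∈ e), g e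
      = n * (Real.sqrt ((n+1)^2 + n^2) / (n+1) - Real.sqrt 2) := by
    rw [hB]
    have hc : ∀ e ∈ G.incidenceFinset v,
        g e = Real.sqrt ((n+1)^2 + n^2) / (n+1) - Real.sqrt 2 := by
      intro e he
      rw [SimpleGraph.mem_incidenceFinset] at he
      obtain ⟨he, hv⟩ := he
      obtain ⟨w, rfl⟩ := Sym2.mem_iff_exists.mp hv
      rw [SimpleGraph.mem_edgeSet] at he
      have hwv : w ≠ v := fun h => G.ne_of_adj he (h ▸ rfl) |>.elim
      have hwu : w ≠ u := fun h => hnadj (h ▸ he).symm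
      have hdw : d w = n := by
        show ((G.degree w : ℝ)) = _
        rw [hNv w he, hn]
      rw [hg]
      show eF d' s(v, w) - eF d s(v, w) = _
      rw [eF_mk, eF_mk, hd'v, hd'w w hwu hwv, hdw]
      have hdvn : d v = n := by show ((G.degree v : ℝ)) = _; rw [hn]
      rw [hdvn, max_eq_left (by linarith : (n:ℝ) ≤ n+1), sqrt2 n hn0]
    rw [Finset.sum_congr rfl hc, Finset.sum_const,
      SimpleGraph.card_incidenceFinset_eq_degree, nsmul_eq_mul, ← hn]
  have hsumC : ∑ e ∈ (G.edgeFinset.filter (fun e => ¬ u ∈ e)).filter (fun e => ¬ v ∈ e), g e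
      = 0 := by
    apply Finset.sum_eq_zero
    intro e he
    simp only [Finset.mem_filter] at he
    obtain ⟨⟨-, hu⟩, hv⟩ := he
    induction e using Sym2.ind with
    | _ x y =>
      rw [Sym2.mem_iff, not_or] at hu hv
      rw [hg]
      show eF d' s(x, y) - eF d s(x, y) = 0
      rw [eF_mk, eF_mk, hd'w x (fun h => hu.1 h.symm) (fun h => hv.1 h.symm),
        hd'w y (fun h => hu.2 h.symm) (fun h => hv.2 h.symm), sub_self]
  have hT1 : eF d' s(u, v) = Real.sqrt ((4*n+1)^2 + (n+1)^2) / (4*n+1) := by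
    rw [eF_mk, hd'u, hd'v, max_eq_left (by linarith : (n+1:ℝ) ≤ 4*n+1)]
  rw [hsumA, hsumB, hsumC, hT1]
  have := key n hn3
  linarith
end

section
/- Let G be a graph with minimum degree at least 1, and let u and v be non-adjacent vertices such that d(u) + 1 ≤ d(u′) for every neighbor u′ of u and d(v) + 1 ≤ d(v′) for every neighbor v′ of v. Then cDSO(G + uv) > cDSO(G). -/
open SimpleGraph Finset Real

lemma cDSO_def' {V : Type*} [Fintype V] [DecidableEq V] (G : SimpleGraph V)
    [DecidableRel G.Adj] :
    cDSO G = ∑ e ∈ G.edgeFinset, Sym2.lift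
      ⟨fun x y => Real.sqrt ((G.degree x : ℝ) ^ 2 + (G.degree y : ℝ) ^ 2) /
        max (G.degree x : ℝ) (G.degree y : ℝ),
       fun x y => by simp [add_comm, max_comm]⟩ e := by
  unfold cDSO
  congr!

lemma key_ineq (x y : ℝ) (hx : 0 ≤ x) (h : x + 1 ≤ y) :
    Real.sqrt (x ^ 2 + y ^ 2) / max x y ≤
      Real.sqrt ((x + 1) ^ 2 + y ^ 2) / max (x + 1) y := by
  have hy : 0 < y := by linarith
  rw [max_eq_right (by linarith), max_eq_right h]
  gcongr
  nlinarith

theorem stmt17 {V : Type*} [Fintype V] (G : SimpleGraph V) [DecidableRel G.Adj]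
    (hδ : 1 ≤ G.minDegree)
    (u v : V) (huv : u ≠ v) (hnadj : ¬ G.Adj u v)
    (hNu : ∀ w, G.Adj u w → G.degree u + 1 ≤ G.degree w)
    (hNv : ∀ w, G.Adj v w → G.degree v + 1 ≤ G.degree w) :
    cDSO G < cDSO (addEdge G u v) := by
  classical
  rw [cDSO_def' G, cDSO_def' (addEdge G u v)]
  have hGe : addEdge G u v = G ⊔ edge u v := rfl
  -- degree facts
  have hnu : (addEdge G u v).neighborFinset u = insert v (G.neighborFinset u) := by
    ext w; rw [hGe]; simp [edge_adj, huv]; aesop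
  have hnv : (addEdge G u v).neighborFinset v = insert u (G.neighborFinset v) := by
    ext w; rw [hGe]; simp [edge_adj, huv]
    constructor
    · rintro (h | ⟨h1, h2⟩ | ⟨h1, h2⟩) <;> simp_all [G.adj_comm]
    · rintro (rfl | h) <;> simp_all [G.adj_comm, huv.symm]
  have hdu : (addEdge G u v).degree u = G.degree u + 1 := by
    rw [degree, hnu, card_insert_of_notMem (by simpa using hnadj), card_neighborFinset_eq_degree]
  have hdv : (addEdge G u v).degree v = G.degree v + 1 := by
    rw [degree, hnv, card_insert_of_notMem (by simp [G.adj_comm]; exact fun h => hnadj h),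
      card_neighborFinset_eq_degree]
  have hdw : ∀ w, w ≠ u → w ≠ v → (addEdge G u v).degree w = G.degree w := by
    intro w hwu hwv
    rw [degree, degree]
    congr 1
    ext x; rw [hGe]; simp [edge_adj]; aesop
  have hE : (addEdge G u v).edgeFinset = insert s(u,v) G.edgeFinset := by
    ext e
    rw [mem_edgeFinset, mem_insert, mem_edgeFinset, hGe, edgeSet_sup, Set.mem_union,
      edge_edgeSet_of_ne huv, Set.mem_singleton_iff]
    tauto
  rw [hE, Finset.sum_insert (by simpa using hnadj)]
  have hstep : ∀ e ∈ G.edgeFinset,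
      Sym2.lift ⟨fun x y => Real.sqrt ((G.degree x : ℝ) ^ 2 + (G.degree y : ℝ) ^ 2) /
        max (G.degree x : ℝ) (G.degree y : ℝ), fun x y => by simp [add_comm, max_comm]⟩ e ≤
      Sym2.lift ⟨fun x y => Real.sqrt (((addEdge G u v).degree x : ℝ) ^ 2 +
        ((addEdge G u v).degree y : ℝ) ^ 2) /
        max (((addEdge G u v)).degree x : ℝ) ((addEdge G u v).degree y : ℝ),
        fun x y => by simp [add_comm, max_comm]⟩ e := by
    intro e he
    induction e using Sym2.ind with
    | _ a b =>
      rw [mem_edgeFinset, mem_edgeSet] at he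
      simp only [Sym2.lift_mk]
      by_cases hau : a = u
      · subst hau
        have hbv : b ≠ v := fun h => hnadj (h ▸ he)
        have hbu : b ≠ a := (G.ne_of_adj he).symm
        rw [hdu, hdw b hbu hbv]
        have := hNu b he
        push_cast
        exact key_ineq _ _ (by positivity) (by exact_mod_cast this)
      · by_cases hav : a = v
        · subst hav
          have hbu : b ≠ u := fun h => hnadj (G.adj_comm .. |>.mp (h ▸ he))
          have hba : b ≠ a := (G.ne_of_adj he).symm
          rw [hdv, hdw b hbu hba]
          have := hNv b he
          push_cast
          exact key_ineq _ _ (by positivity) (by exact_mod_cast this)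
        · by_cases hbu : b = u
          · subst hbu
            have hav2 : a ≠ b := G.ne_of_adj he
            rw [hdu, hdw a hau hav]
            have := hNu a (G.adj_comm .. |>.mp he)
            push_cast
            rw [max_comm ((G.degree a : ℝ)) _, max_comm ((G.degree a : ℝ)) _,
              add_comm ((G.degree a : ℝ)^2) _, add_comm ((G.degree a : ℝ)^2) _]
            exact key_ineq _ _ (by positivity) (by exact_mod_cast this)
          · by_cases hbv : b = v
            · subst hbv
              rw [hdv, hdw a hau hav]
              have := hNv a (G.adj_comm .. |>.mp he)
              push_cast
              rw [max_comm ((G.degree a : ℝ)) _, max_comm ((G.degree a : ℝ)) _,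
                add_comm ((G.degree a : ℝ)^2) _, add_comm ((G.degree a : ℝ)^2) _]
              exact key_ineq _ _ (by positivity) (by exact_mod_cast this)
            · rw [hdw a hau hav, hdw b hbu hbv]
  calc ∑ e ∈ G.edgeFinset, _ ≤ _ := Finset.sum_le_sum hstep
    _ < _ := by
        apply lt_add_of_pos_left
        simp only [Sym2.lift_mk]
        rw [hdu, hdv]
        have h1 : (0:ℝ) < ((G.degree u : ℝ) + 1) := by positivity
        push_cast
        positivity
end
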